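/- arXiv:math/0112023 — 5 statements merged into one kernel-verified Lean document; each statement's English description precedes it below -/
import Mathlib

section
/- Let n ≥ 1 and let A be a real (n+1)×(n+1) symmetric matrix with trace zero. Then for every vector v ∈ ℝ^{n+1} with ∑_{i} v_i² = 1, one has ∑_i (∑_j A_{ij} v_j)² ≤ (n/(n+1)) · ∑_{i,j} A_{ij}². (This is the pointwise linear-algebra core of the refined Kato inequality of Lemma 2: applied to the trace-free Hessian of a harmonic function, it gives |∇²u|² ≥ (1+1/n)|∇|∇u||².) -/
lemma kato_aux {m : ℕ} (x v w : Fin m → ℝ) (b c : ℝ) :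
    ∑ j, (x j - b * v j - c * w j) ^ 2 =
      ∑ j, x j ^ 2 + b ^ 2 * ∑ j, v j ^ 2 + c ^ 2 * ∑ j, w j ^ 2
        - 2 * b * ∑ j, x j * v j - 2 * c * ∑ j, x j * w j
        + 2 * b * c * ∑ j, v j * w j := by
  simp only [Finset.mul_sum, ← Finset.sum_add_distrib, ← Finset.sum_sub_distrib]
  exact Finset.sum_congr rfl fun j _ => by ring

/-- Pointwise linear-algebra core of the refined Kato inequality (Lemma 2):
for a real symmetric trace-free `(n+1) × (n+1)` matrix `A` and a unit vector `v`,
`‖A v‖² ≤ (n/(n+1)) ‖A‖²` (Frobenius norm). -/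
theorem kato_linear_algebra (n : ℕ) (hn : 1 ≤ n)
    (A : Matrix (Fin (n + 1)) (Fin (n + 1)) ℝ)
    (hsym : A.transpose = A) (htrace : ∑ i, A i i = 0)
    (v : Fin (n + 1) → ℝ) (hv : ∑ i, (v i) ^ 2 = 1) :
    ∑ i, (∑ j, A i j * v j) ^ 2 ≤ ((n : ℝ) / (n + 1)) * ∑ i, ∑ j, (A i j) ^ 2 := by
  have hA : ∀ i j, A j i = A i j := fun i j => by
    conv_rhs => rw [← hsym]
    rfl
  set N := (n : ℝ) with hN
  have hN1 : (1:ℝ) ≤ N := by rw [hN]; exact_mod_cast hn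
  set Av : Fin (n+1) → ℝ := fun i => ∑ j, A i j * v j with hAvdef
  set l : ℝ := ∑ i, v i * Av i with hl
  set w : Fin (n+1) → ℝ := fun i => Av i - l * v i with hwdef
  set T : ℝ := ∑ i, w i ^ 2 with hTdef
  have hT0 : 0 ≤ T := Finset.sum_nonneg fun i _ => sq_nonneg _
  have hp : ∑ i, v i * w i = 0 := by
    have : ∀ i, v i * w i = v i * Av i - l * v i ^ 2 := fun i => by
      simp only [hwdef]; ring
    rw [Finset.sum_congr rfl fun i _ => this i, Finset.sum_sub_distrib,
      ← Finset.mul_sum, hv]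
    simp [hl]
  have hAv : ∀ i, Av i = w i + l * v i := fun i => by simp [hwdef]
  have hwAv : ∑ i, w i * Av i = T := by
    have : ∀ i, w i * Av i = w i ^ 2 + l * (v i * w i) := fun i => by
      rw [hAv i]; ring
    rw [Finset.sum_congr rfl fun i _ => this i, Finset.sum_add_distrib,
      ← Finset.mul_sum, hp, hTdef]
    ring
  have hvAv : ∑ i, v i * Av i = l := hl.symm
  set Aw : Fin (n+1) → ℝ := fun i => ∑ j, A i j * w j with hAwdef
  have hvAw : ∑ i, v i * Aw i = T := by
    have step : ∀ i, v i * Aw i = ∑ j, v i * (A i j * w j) := fun i => by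
      rw [hAwdef, Finset.mul_sum]
    rw [Finset.sum_congr rfl fun i _ => step i, Finset.sum_comm]
    have inner : ∀ j, ∑ i, v i * (A i j * w j) = w j * Av j := fun j => by
      simp only [hAvdef, Finset.mul_sum]
      exact Finset.sum_congr rfl fun i _ => by rw [hA j i]; ring
    rw [Finset.sum_congr rfl fun j _ => inner j, hwAv]
  set S : ℝ := ∑ i, ∑ j, (A i j)^2 with hSdef
  set a : Fin (n+1) → ℝ := fun i => (N+1)*l*v i + N*w i with hadef
  set C : Fin (n+1) → Fin (n+1) → ℝ :=
    fun i j => (N*A i j + l*(if j = i then 1 else 0)) - a i * v j - (N*v i) * w j with hCdef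
  have hx2 : ∀ i, ∑ j, (N*A i j + l*(if j = i then (1:ℝ) else 0))^2
      = N^2 * (∑ j, (A i j)^2) + 2*N*l*(A i i) + l^2 := by
    intro i
    rw [Finset.sum_congr rfl (fun j _ => show _ = N^2*(A i j)^2 + (if j = i then 2*N*l*A i j + l^2 else 0) from by split <;> ring)]
    rw [Finset.sum_add_distrib, ← Finset.mul_sum, Finset.sum_ite_eq']
    simp
    ring
  have hxv : ∀ i, ∑ j, (N*A i j + l*(if j = i then (1:ℝ) else 0)) * v j
      = N*Av i + l*v i := by
    intro i
    rw [Finset.sum_congr rfl (fun j _ => show _ = N*(A i j * v j) + (if j = i then l*v j else 0) from by split <;> ring)]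
    rw [Finset.sum_add_distrib, ← Finset.mul_sum, Finset.sum_ite_eq']
    simp [hAvdef]
  have hxw : ∀ i, ∑ j, (N*A i j + l*(if j = i then (1:ℝ) else 0)) * w j
      = N*Aw i + l*w i := by
    intro i
    rw [Finset.sum_congr rfl (fun j _ => show _ = N*(A i j * w j) + (if j = i then l*w j else 0) from by split <;> ring)]
    rw [Finset.sum_add_distrib, ← Finset.mul_sum, Finset.sum_ite_eq']
    simp [hAwdef]
  have inner : ∀ i, ∑ j, (C i j)^2
      = N^2 * (∑ j, (A i j)^2) + (2*N*l) * A i i + l^2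
        + ((N+1)^2*l^2 + N^2*T - 2*(N+1)*l^2) * v i^2
        + (2*N*(N+1)*l - 4*N*l) * (v i * w i)
        + N^2 * w i^2
        + (-(2*N*(N+1)*l)) * (v i * Av i)
        + (-(2*N^2)) * (w i * Av i)
        + (-(2*N^2)) * (v i * Aw i) := by
    intro i
    rw [hCdef]
    rw [kato_aux (fun j => N*A i j + l*(if j = i then (1:ℝ) else 0)) v w (a i) (N*v i)]
    rw [hx2 i, hxv i, hxw i, hv, hp, hTdef.symm]
    rw [hadef]
    ring
  have key : ∑ i, ∑ j, (C i j)^2 = N^2 * S - N*(N+1)*l^2 - 2*N^2*T := by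
    rw [Finset.sum_congr rfl (fun i _ => inner i)]
    simp only [Finset.sum_add_distrib, ← Finset.mul_sum, Finset.sum_const,
      Finset.card_univ, Fintype.card_fin, nsmul_eq_mul]
    rw [hv, hp, hwAv, hvAv, hvAw, htrace, ← hTdef, ← hSdef, hN]
    push_cast
    ring
  have hC0 : (0:ℝ) ≤ ∑ i, ∑ j, (C i j)^2 :=
    Finset.sum_nonneg fun i _ => Finset.sum_nonneg fun j _ => sq_nonneg _
  have hN0 : (0:ℝ) < N := by linarith
  have hdiv : (N+1)*l^2 + 2*N*T ≤ N * S := by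
    have h : N*(N+1)*l^2 + 2*N^2*T ≤ N^2*S := by linarith
    rw [show N*(N+1)*l^2 + 2*N^2*T = N*((N+1)*l^2 + 2*N*T) from by ring,
      show N^2*S = N*(N*S) from by ring] at h
    exact le_of_mul_le_mul_left h hN0
  have hgoal : ∑ i, (∑ j, A i j * v j) ^ 2 = l^2 + T := by
    have step : ∀ i, (∑ j, A i j * v j)^2
        = w i^2 + (2*l)*(v i * w i) + l^2 * v i^2 := fun i => by
      rw [show (∑ j, A i j * v j) = Av i from rfl, hAv i]; ring
    rw [Finset.sum_congr rfl (fun i _ => step i), Finset.sum_add_distrib,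
      Finset.sum_add_distrib, ← Finset.mul_sum, ← Finset.mul_sum, hv, hp, ← hTdef]
    ring
  rw [hgoal, div_mul_eq_mul_div, le_div_iff₀ (by linarith : (0:ℝ) < N+1)]
  nlinarith [hdiv, mul_nonneg hT0 (by linarith : (0:ℝ) ≤ N - 1)]
end

section
/- Let n ≥ 1, let U be an open subset of the Euclidean space ℝ^{n+1}, and let u : ℝ^{n+1} → ℝ be harmonic on U, i.e. u is C² on U and ∑_{i=0}^{n} ∂²u/∂x_i² = 0 at every point of U. Let x ∈ U be a point where the gradient ∇u(x) ≠ 0. Then the function y ↦ ‖∇u(y)‖ is differentiable at x and ‖∇(‖∇u‖)(x)‖² ≤ (n/(n+1)) · ∑_{i,j=0}^{n} (∂²u/∂x_i∂x_j (x))². Equivalently, the squared Frobenius norm of the Hessian satisfies |∇²u(x)|² ≥ (1 + 1/n) |∇|∇u|(x)|². -/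
/-! At a point where `∇u ≠ 0`, the gradient of `‖∇u‖` is `H v`, where `H` is the Hessian
(symmetric, and traceless by harmonicity) and `v = ∇u / ‖∇u‖`. In an orthonormal basis with first
vector `v`, `‖H v‖²` is the squared norm of the first row of `H`. Cauchy–Schwarz applied to
`H₀₀ = -∑_{i≠0} Hᵢᵢ` gives `H₀₀² ≤ n ∑_{i≠0} Hᵢᵢ²`, and by symmetry the off-diagonal entries of the
first row occur twice in `|H|²`; together these give `(n+1) ‖H v‖² ≤ n |H|²`. -/

open Finset InnerProductSpace
open scoped RealInnerProductSpace

theorem Matrix.IsSymm.card_mul_sum_sq_row_le {ι : Type*} [Fintype ι] [DecidableEq ι]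
    {M : Matrix ι ι ℝ} (hM : M.IsSymm) (htr : M.trace = 0) (i₀ : ι) :
    (Fintype.card ι : ℝ) * ∑ j, M i₀ j ^ 2 ≤ (Fintype.card ι - 1) * ∑ i, ∑ j, M i j ^ 2 := by
  set t := univ.erase i₀
  set m : ℝ := (t.card : ℝ)
  have hm : (Fintype.card ι : ℝ) = m + 1 := by
    rw [← Nat.cast_add_one, card_erase_add_one (mem_univ i₀), card_univ]
  set a := M i₀ i₀
  set S := ∑ j ∈ t, M i₀ j ^ 2
  set D := ∑ i ∈ t, M i i ^ 2
  have hrow : ∑ j, M i₀ j ^ 2 = a ^ 2 + S := (add_sum_erase _ _ (mem_univ i₀)).symm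
  have ha : a ^ 2 ≤ m * D := by
    have hsum : a = -∑ i ∈ t, M i i := by
      have htr' : ∑ i, M i i = 0 := htr
      linarith [add_sum_erase univ (fun i => M i i) (mem_univ i₀)]
    rw [hsum, neg_sq]
    exact sq_sum_le_card_mul_sum_sq
  have htotal : a ^ 2 + S + (S + D) ≤ ∑ i, ∑ j, M i j ^ 2 := by
    rw [← add_sum_erase univ _ (mem_univ i₀), ← hrow, ← sum_add_distrib]
    gcongr with i hi
    have hne : i₀ ≠ i := (ne_of_mem_erase hi).symm
    calc M i₀ i ^ 2 + M i i ^ 2 = ∑ j ∈ {i₀, i}, M i j ^ 2 := by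
          rw [sum_pair hne, ← hM.apply i₀ i]
      _ ≤ ∑ j, M i j ^ 2 := sum_le_sum_of_subset_of_nonneg (subset_univ _) fun _ _ _ => sq_nonneg _
  have hS : S ≤ m * S := by
    rcases t.eq_empty_or_nonempty with ht | ht
    · simp [S, ht]
    · exact le_mul_of_one_le_left (sum_nonneg fun _ _ => sq_nonneg _)
        (Nat.one_le_cast.mpr ht.card_pos)
  have hm0 : 0 ≤ m := Nat.cast_nonneg _
  rw [hm, hrow, add_sub_cancel_right]
  nlinarith [mul_le_mul_of_nonneg_left htotal hm0]

variable {E : Type*} [NormedAddCommGroup E] [InnerProductSpace ℝ E]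

section LinearAlgebra

theorem LinearMap.trace_adjoint_mul_self [FiniteDimensional ℝ E] {ι : Type*} [Fintype ι]
    (A : E →ₗ[ℝ] E) (b : OrthonormalBasis ι ℝ E) :
    trace ℝ E (adjoint A * A) = ∑ i, ‖A (b i)‖ ^ 2 := by
  simp_rw [trace_eq_sum_inner _ b, Module.End.mul_apply, adjoint_inner_right,
    real_inner_self_eq_norm_sq]

theorem LinearMap.IsSymmetric.card_mul_norm_sq_apply_le [FiniteDimensional ℝ E]
    {ι : Type*} [Fintype ι] {A : E →ₗ[ℝ] E} (hA : A.IsSymmetric) (htr : trace ℝ E A = 0)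
    (b : OrthonormalBasis ι ℝ E) {v : E} (hv : ‖v‖ = 1) :
    (Fintype.card ι : ℝ) * ‖A v‖ ^ 2 ≤ (Fintype.card ι - 1) * ∑ i, ‖A (b i)‖ ^ 2 := by
  classical
  have : Nontrivial E := nontrivial_of_ne v 0 (by rintro rfl; simp at hv)
  obtain ⟨i₀⟩ := b.toBasis.index_nonempty
  obtain ⟨c, hc⟩ := Orthonormal.exists_orthonormalBasis_extension_of_card_eq
    (Module.finrank_eq_card_basis b.toBasis) (v := fun _ => v) (s := {i₀})
    (orthonormal_subsingleton_iff.mpr fun _ => hv)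
  set M : Matrix ι ι ℝ := .of fun i j => ⟪c i, A (c j)⟫
  have hM : M.IsSymm := .ext fun i j => by
    change ⟪c j, A (c i)⟫ = ⟪c i, A (c j)⟫
    rw [← hA, real_inner_comm]
  have hMtr : M.trace = 0 := by
    rw [← htr, trace_eq_sum_inner A c]
    rfl
  have hrow : ∑ j, M i₀ j ^ 2 = ‖A v‖ ^ 2 := by
    simp only [M, Matrix.of_apply, hc i₀ rfl, ← hA v _, c.sum_sq_inner_left]
  have hfrob : ∑ i, ∑ j, M i j ^ 2 = ∑ i, ‖A (b i)‖ ^ 2 := by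
    simp only [M, Matrix.of_apply]
    rw [sum_comm, ← trace_adjoint_mul_self A b, trace_adjoint_mul_self A c]
    simp only [c.sum_sq_inner_right]
  simpa only [hrow, hfrob] using hM.card_mul_sum_sq_row_le hMtr i₀

end LinearAlgebra

section Calculus

variable [CompleteSpace E]

theorem HasFDerivAt.hasGradientAt_norm {g : E → E} {A : E →L[ℝ] E} {x : E}
    (hg : HasFDerivAt g A x) (hA : (A : E →ₗ[ℝ] E).IsSymmetric) (h0 : g x ≠ 0) :
    HasGradientAt (fun y => ‖g y‖) (A (‖g x‖⁻¹ • g x)) x := by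
  have hsqrt := (Real.hasDerivAt_sqrt (by positivity : ‖g x‖ ^ 2 ≠ 0)).comp_hasFDerivAt x hg.norm_sq
  simp only [Function.comp_def, Real.sqrt_sq (norm_nonneg _)] at hsqrt
  rw [hasGradientAt_iff_hasFDerivAt]
  refine hsqrt.congr_fderiv (ContinuousLinearMap.ext fun w => ?_)
  have hAw : ⟪A (g x), w⟫ = ⟪g x, A w⟫ := hA (g x) w
  simp only [toDual_apply_apply, smul_apply, ContinuousLinearMap.comp_apply, innerSL_apply_apply,
    map_smul, hAw, smul_eq_mul, nsmul_eq_mul, Nat.cast_ofNat]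
  field_simp

noncomputable def hessian (u : E → ℝ) (x : E) : E →L[ℝ] E :=
  (toDual ℝ E).symm.toContinuousLinearEquiv.toContinuousLinearMap ∘L fderiv ℝ (fderiv ℝ u) x

theorem inner_hessian_apply (u : E → ℝ) (x v w : E) :
    ⟪hessian u x v, w⟫ = fderiv ℝ (fderiv ℝ u) x v w :=
  toDual_symm_apply

theorem DifferentiableAt.hasFDerivAt_gradient {u : E → ℝ} {x : E}
    (h : DifferentiableAt ℝ (fderiv ℝ u) x) : HasFDerivAt (gradient u) (hessian u x) x :=
  ((toDual ℝ E).symm.toContinuousLinearEquiv.toContinuousLinearMap.hasFDerivAt).comp x h.hasFDerivAt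

theorem IsSymmSndFDerivAt.isSymmetric_hessian {u : E → ℝ} {x : E} (h : IsSymmSndFDerivAt ℝ u x) :
    (hessian u x : E →ₗ[ℝ] E).IsSymmetric := fun v w => by
  rw [ContinuousLinearMap.coe_coe, inner_hessian_apply, real_inner_comm, inner_hessian_apply, h]

theorem DifferentiableAt.fderiv_fderiv_apply_eq_inner_hessian {u : E → ℝ} {x : E}
    (h : DifferentiableAt ℝ (fderiv ℝ u) x) (v w : E) :
    fderiv ℝ (fun z => fderiv ℝ u z w) x v = ⟪hessian u x v, w⟫ := by
  rw [inner_hessian_apply, fderiv_clm_apply h (differentiableAt_const w)]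
  simp

theorem trace_hessian {ι : Type*} [Fintype ι] (u : E → ℝ) (x : E) (b : OrthonormalBasis ι ℝ E) :
    LinearMap.trace ℝ E (hessian u x) = ∑ i, ⟪hessian u x (b i), b i⟫ := by
  simp_rw [LinearMap.trace_eq_sum_inner _ b, ContinuousLinearMap.coe_coe, real_inner_comm]

end Calculus

theorem refined_kato_harmonic_general (n : ℕ)
    (U : Set (EuclideanSpace ℝ (Fin (n + 1)))) (hU : IsOpen U)
    (u : EuclideanSpace ℝ (Fin (n + 1)) → ℝ)
    (hC2 : ContDiffOn ℝ 2 u U)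
    (hharm : ∀ y ∈ U,
      ∑ i, fderiv ℝ (fun z => fderiv ℝ u z (EuclideanSpace.single i 1)) y
        (EuclideanSpace.single i 1) = 0)
    (x : EuclideanSpace ℝ (Fin (n + 1))) (hx : x ∈ U)
    (hgrad : gradient u x ≠ 0) :
    DifferentiableAt ℝ (fun y => ‖gradient u y‖) x ∧
      ‖gradient (fun y => ‖gradient u y‖) x‖ ^ 2 ≤
        ((n : ℝ) / (n + 1)) *
          ∑ i, ∑ j,
            (fderiv ℝ (fun z => fderiv ℝ u z (EuclideanSpace.single j 1)) x
              (EuclideanSpace.single i 1)) ^ 2 := by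
  set e := EuclideanSpace.basisFun (Fin (n + 1)) ℝ
  have he : ∀ i, EuclideanSpace.single i 1 = e i :=
    fun i => (EuclideanSpace.basisFun_apply _ _ i).symm
  have hux : ContDiffAt ℝ 2 u x := hC2.contDiffAt (hU.mem_nhds hx)
  have hD : DifferentiableAt ℝ (fderiv ℝ u) x :=
    (hux.fderiv_right le_rfl).differentiableAt one_ne_zero
  have hsymm := (hux.isSymmSndFDerivAt (by simp)).isSymmetric_hessian
  have hentry := hD.fderiv_fderiv_apply_eq_inner_hessian
  have htr : LinearMap.trace ℝ _ (hessian u x).toLinearMap = 0 := by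
    simpa only [trace_hessian u x e, he, hentry] using hharm x hx
  have hgradN := hD.hasFDerivAt_gradient.hasGradientAt_norm hsymm hgrad
  refine ⟨hgradN.differentiableAt, ?_⟩
  have hkato := hsymm.card_mul_norm_sq_apply_le (v := ‖gradient u x‖⁻¹ • gradient u x) htr e
    (norm_smul_inv_norm hgrad)
  simp only [Fintype.card_fin, Nat.cast_add_one, add_sub_cancel_right,
    ContinuousLinearMap.coe_coe] at hkato
  simp only [he, hentry, e.sum_sq_inner_left, hgradN.gradient]
  rw [div_mul_eq_mul_div, le_div_iff₀ (by positivity)]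
  linarith

/-- Refined Kato inequality for a harmonic function on an open subset of
Euclidean space `ℝ^{n+1}`: at any point where `∇u ≠ 0`, the function `‖∇u‖`
is differentiable and `‖∇‖∇u‖‖² ≤ (n/(n+1)) |∇²u|²` (Frobenius norm of the
Hessian), equivalently `|∇²u|² ≥ (1 + 1/n) |∇|∇u||²`. -/
theorem refined_kato_harmonic (n : ℕ) (hn : 1 ≤ n)
    (U : Set (EuclideanSpace ℝ (Fin (n + 1)))) (hU : IsOpen U)
    (u : EuclideanSpace ℝ (Fin (n + 1)) → ℝ)
    (hC2 : ContDiffOn ℝ 2 u U)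
    (hharm : ∀ y ∈ U,
      ∑ i, fderiv ℝ (fun z => fderiv ℝ u z (EuclideanSpace.single i 1)) y
        (EuclideanSpace.single i 1) = 0)
    (x : EuclideanSpace ℝ (Fin (n + 1))) (hx : x ∈ U)
    (hgrad : gradient u x ≠ 0) :
    DifferentiableAt ℝ (fun y => ‖gradient u y‖) x ∧
      ‖gradient (fun y => ‖gradient u y‖) x‖ ^ 2 ≤
        ((n : ℝ) / (n + 1)) *
          ∑ i, ∑ j,
            (fderiv ℝ (fun z => fderiv ℝ u z (EuclideanSpace.single j 1)) x
              (EuclideanSpace.single i 1)) ^ 2 :=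
  refined_kato_harmonic_general n U hU u hC2 hharm x hx hgrad
end

section
/- (Flat-domain version of Lemma 2.) Let n ≥ 1, m ≥ 1, let U be an open subset of the Euclidean space ℝ^{n+1}, and let f^1, …, f^m : ℝ^{n+1} → ℝ each be harmonic on U, i.e. each f^α is C² on U and ∑_{i=0}^{n} ∂²f^α/∂x_i² = 0 at every point of U. Define the pointwise energy density norm |∇f|(y) = (∑_{α=1}^{m} ‖∇f^α(y)‖²)^{1/2}. Then at every point x ∈ U with |∇f|(x) ≠ 0, the function |∇f| is differentiable at x and ‖∇(|∇f|)(x)‖² ≤ (n/(n+1)) · ∑_{α=1}^{m} ∑_{i,j=0}^{n} (∂²f^α/∂x_i∂x_j (x))². Equivalently, |∇²f(x)|² ≥ (1 + 1/n) |∇|∇f|(x)|². -/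
/-!
Where the energy `e = ∑ α ‖∇f^α‖²` is positive, `∇√e = e^{-1/2} ∑ α (∇²f^α) ∇f^α`, so by
Cauchy–Schwarz `⟪∇√e, w⟫² ≤ ∑ α ‖(∇²f^α) w‖²`. The gain over the plain Kato inequality is linear
algebra: for a symmetric trace-free matrix `M` of size `n + 1` and a unit vector `u`,
`‖M u‖² ≤ n/(n+1) ‖M‖²`. In an orthonormal basis starting with `u`, the trace condition gives
`M₀₀² ≤ n ∑_{i>0} Mᵢᵢ²`, and the off-diagonal entries of the first row occur twice in `‖M‖²`.
-/

open Finset InnerProductSpace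
open scoped RealInnerProductSpace Gradient

namespace Matrix

theorem IsSymm.sum_sq_row_zero_le_of_trace_eq_zero {n : ℕ}
    {M : Matrix (Fin (n + 1)) (Fin (n + 1)) ℝ} (hM : M.IsSymm) (htr : M.trace = 0) :
    ∑ j, M 0 j ^ 2 ≤ (n / (n + 1) : ℝ) * ∑ i, ∑ j, M i j ^ 2 := by
  set S := ∑ j : Fin n, M 0 j.succ ^ 2
  set Q := ∑ i : Fin n, M i.succ i.succ ^ 2
  set R := ∑ i : Fin n, ∑ j : Fin n, M i.succ j.succ ^ 2
  have hdiag : M 0 0 ^ 2 ≤ n * Q := by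
    have h : M 0 0 = -∑ i : Fin n, M i.succ i.succ := by
      rw [trace, Fin.sum_univ_succ] at htr
      simp only [diag_apply] at htr
      linarith
    rw [h, neg_sq]
    simpa using sq_sum_le_card_mul_sum_sq (s := univ) (f := fun i : Fin n => M i.succ i.succ)
  have hQR : Q ≤ R := sum_le_sum fun i _ =>
    single_le_sum (f := fun j => M i.succ j.succ ^ 2) (fun j _ => sq_nonneg _) (mem_univ i)
  have hS : S ≤ n * S := by
    rcases n.eq_zero_or_pos with rfl | hn
    · simp [S]
    · exact le_mul_of_one_le_left (sum_nonneg fun j _ => sq_nonneg _) (by exact_mod_cast hn)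
  have hrow : ∑ j, M 0 j ^ 2 = M 0 0 ^ 2 + S := Fin.sum_univ_succ _
  have hsum : ∑ i, ∑ j, M i j ^ 2 = M 0 0 ^ 2 + 2 * S + R := by
    simp only [Fin.sum_univ_succ (n := n), hM.apply 0, sum_add_distrib]
    ring
  rw [hrow, hsum, div_mul_eq_mul_div, le_div_iff₀ (by positivity)]
  nlinarith [hdiag, hQR, hS, (n.cast_nonneg : (0 : ℝ) ≤ n)]

end Matrix

namespace OrthonormalBasis

variable {E : Type*} [NormedAddCommGroup E] [InnerProductSpace ℝ E]
  {ι κ : Type*} [Fintype ι] [Fintype κ]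

theorem sum_sum_sq_apply_apply_eq (b : OrthonormalBasis ι ℝ E) (c : OrthonormalBasis κ ℝ E)
    (T : E →L[ℝ] E →L[ℝ] ℝ) :
    ∑ i, ∑ j, T (b i) (b j) ^ 2 = ∑ k, ∑ l, T (c k) (c l) ^ 2 :=
  calc ∑ i, ∑ j, T (b i) (b j) ^ 2
    _ = ∑ i, ∑ l, T (b i) (c l) ^ 2 := by simp_rw [← norm_dual]
    _ = ∑ l, ∑ i, T.flip (c l) (b i) ^ 2 := sum_comm
    _ = ∑ l, ∑ k, T.flip (c l) (c k) ^ 2 := by simp_rw [← norm_dual]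
    _ = ∑ k, ∑ l, T (c k) (c l) ^ 2 := sum_comm

theorem sum_apply_apply_self_eq (b : OrthonormalBasis ι ℝ E)
    (c : OrthonormalBasis κ ℝ E) (T : E →L[ℝ] E →L[ℝ] ℝ) :
    ∑ i, T (b i) (b i) = ∑ k, T (c k) (c k) := by
  have := b.toBasis.finiteDimensional_of_finite
  have := FiniteDimensional.complete ℝ E
  let L : E →ₗ[ℝ] E := continuousLinearMapOfBilin (𝕜 := ℝ) T
  calc ∑ i, T (b i) (b i)
    _ = L.trace ℝ E := by
        simp [L.trace_eq_sum_inner b, L, real_inner_comm _ (b _), continuousLinearMapOfBilin_apply]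
    _ = ∑ k, T (c k) (c k) := by
        simp [L.trace_eq_sum_inner c, L, real_inner_comm _ (c _), continuousLinearMapOfBilin_apply]

end OrthonormalBasis

section

variable {E : Type*} [NormedAddCommGroup E] [InnerProductSpace ℝ E] {ι : Type*} [Fintype ι]

theorem norm_sq_apply_le_of_sum_apply_apply_self_eq_zero {n : ℕ}
    (hE : Module.finrank ℝ E = n + 1) (b : OrthonormalBasis ι ℝ E) {T : E →L[ℝ] E →L[ℝ] ℝ}
    (hT : ∀ u v, T u v = T v u) (htr : ∑ i, T (b i) (b i) = 0) (u : E) :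
    ‖T u‖ ^ 2 ≤ (n / (n + 1) : ℝ) * (∑ i, ∑ j, T (b i) (b j) ^ 2) * ‖u‖ ^ 2 := by
  have := Module.finite_of_finrank_eq_succ hE
  rcases eq_or_ne u 0 with rfl | hu
  · simp
  obtain ⟨c, hc⟩ := (orthonormal_subsingleton_iff.mpr fun _ => norm_smul_inv_norm hu :
      Orthonormal ℝ (({0} : Set (Fin (n + 1))).domRestrict fun _ => ‖u‖⁻¹ • u))
    |>.exists_orthonormalBasis_extension_of_card_eq (by simpa using hE)
  have hTu : T u = ‖u‖ • T (c 0) := by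
    rw [hc 0 rfl, map_smul, smul_smul, mul_inv_cancel₀ (norm_ne_zero_iff.mpr hu), one_smul]
  have hM : (Matrix.of fun i j => T (c i) (c j)).IsSymm := Matrix.IsSymm.ext fun i j => hT _ _
  have hrow := hM.sum_sq_row_zero_le_of_trace_eq_zero
    (by simpa [Matrix.trace, c.sum_apply_apply_self_eq b] using htr)
  calc ‖T u‖ ^ 2 = (∑ j, T (c 0) (c j) ^ 2) * ‖u‖ ^ 2 := by
        rw [hTu, norm_smul, norm_norm, ← c.norm_dual]; ring
    _ ≤ (n / (n + 1) : ℝ) * (∑ i, ∑ j, T (c i) (c j) ^ 2) * ‖u‖ ^ 2 := by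
        gcongr; simpa using hrow
    _ = (n / (n + 1) : ℝ) * (∑ i, ∑ j, T (b i) (b j) ^ 2) * ‖u‖ ^ 2 := by
        rw [c.sum_sum_sq_apply_apply_eq b]

theorem sq_sum_apply_le {κ : Type*} [Fintype κ] (φ : κ → StrongDual ℝ E) (v : κ → E) :
    (∑ α, φ α (v α)) ^ 2 ≤ (∑ α, ‖φ α‖ ^ 2) * ∑ α, ‖v α‖ ^ 2 :=
  calc (∑ α, φ α (v α)) ^ 2
    _ ≤ (∑ α, ‖φ α‖ * ‖v α‖) ^ 2 := by
        rw [← sq_abs]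
        gcongr
        exact (abs_sum_le_sum_abs _ _).trans (sum_le_sum fun α _ => (φ α).le_opNorm (v α))
    _ ≤ (∑ α, ‖φ α‖ ^ 2) * ∑ α, ‖v α‖ ^ 2 := sum_mul_sq_le_sq_mul_sq _ _ _

theorem norm_sq_le_of_forall_inner_sq_le {W : E} {K : ℝ} (hK : 0 ≤ K)
    (h : ∀ w, ⟪W, w⟫ ^ 2 ≤ K * ‖w‖ ^ 2) : ‖W‖ ^ 2 ≤ K := by
  have hW := h W
  rw [real_inner_self_eq_norm_sq] at hW
  nlinarith [sq_nonneg ‖W‖]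

theorem norm_sq_le_of_inner_eq_inv_sqrt_mul_sum {n : ℕ} (hE : Module.finrank ℝ E = n + 1)
    (b : OrthonormalBasis ι ℝ E) {κ : Type*} [Fintype κ] {T : κ → E →L[ℝ] E →L[ℝ] ℝ}
    (hT : ∀ α u v, T α u v = T α v u) (htr : ∀ α, ∑ i, T α (b i) (b i) = 0) {v : κ → E} {W : E}
    (hW : ∀ w, ⟪W, w⟫ = (√(∑ α, ‖v α‖ ^ 2))⁻¹ * ∑ α, T α w (v α)) :
    ‖W‖ ^ 2 ≤ (n / (n + 1) : ℝ) * ∑ α, ∑ i, ∑ j, T α (b i) (b j) ^ 2 := by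
  refine norm_sq_le_of_forall_inner_sq_le (by positivity) fun w => ?_
  calc ⟪W, w⟫ ^ 2
    _ = (∑ α, T α w (v α)) ^ 2 / ∑ α, ‖v α‖ ^ 2 := by
        rw [hW, mul_pow, inv_pow, Real.sq_sqrt (by positivity), inv_mul_eq_div]
    _ ≤ ∑ α, ‖T α w‖ ^ 2 :=
        div_le_of_le_mul₀ (by positivity) (by positivity) (sq_sum_apply_le (fun α => T α w) v)
    _ ≤ ∑ α, (n / (n + 1) : ℝ) * (∑ i, ∑ j, T α (b i) (b j) ^ 2) * ‖w‖ ^ 2 :=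
        sum_le_sum fun α _ => norm_sq_apply_le_of_sum_apply_apply_self_eq_zero hE b (hT α) (htr α) w
    _ = (n / (n + 1) : ℝ) * (∑ α, ∑ i, ∑ j, T α (b i) (b j) ^ 2) * ‖w‖ ^ 2 := by
        rw [← sum_mul, ← mul_sum]

end

section Calculus

variable {E : Type*} [NormedAddCommGroup E] [InnerProductSpace ℝ E] [CompleteSpace E] {x : E}

theorem fderiv_fderiv_apply_apply {𝕜 F G : Type*} [NontriviallyNormedField 𝕜]
    [NormedAddCommGroup F] [NormedSpace 𝕜 F] [NormedAddCommGroup G] [NormedSpace 𝕜 G]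
    {g : F → G} {y : F}
    (hg : DifferentiableAt 𝕜 (fderiv 𝕜 g) y) (u w : F) :
    fderiv 𝕜 (fun z => fderiv 𝕜 g z w) y u = fderiv 𝕜 (fderiv 𝕜 g) y u w := by
  simp [fderiv_clm_apply hg (differentiableAt_const w)]

theorem hasFDerivAt_norm_sq_gradient {f : E → ℝ} (hf : DifferentiableAt ℝ (fderiv ℝ f) x) :
    HasFDerivAt (fun y => ‖∇ f y‖ ^ 2) (2 • (fderiv ℝ (fderiv ℝ f) x).flip (∇ f x)) x := by
  let L : StrongDual ℝ E →L[ℝ] E :=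
    (toDual ℝ E).symm.toContinuousLinearEquiv.toContinuousLinearMap
  have hgrad : HasFDerivAt (∇ f) (L ∘L fderiv ℝ (fderiv ℝ f) x) x :=
    L.hasFDerivAt.comp x hf.hasFDerivAt
  refine hgrad.norm_sq.congr_fderiv ?_
  ext u
  simp only [smul_apply, ContinuousLinearMap.comp_apply, innerSL_apply_apply,
    ContinuousLinearMap.flip_apply, ContinuousLinearEquiv.coe_coe,
    LinearIsometryEquiv.coe_toContinuousLinearEquiv, L]
  rw [real_inner_comm, toDual_symm_apply]

theorem hasFDerivAt_sqrt_sum_norm_sq_gradient {κ : Type*} [Fintype κ] {f : κ → E → ℝ}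
    (hf : ∀ α, DifferentiableAt ℝ (fderiv ℝ (f α)) x) (hx : ∑ α, ‖∇ (f α) x‖ ^ 2 ≠ 0) :
    HasFDerivAt (fun y => √(∑ α, ‖∇ (f α) y‖ ^ 2))
      ((√(∑ α, ‖∇ (f α) x‖ ^ 2))⁻¹ • ∑ α, (fderiv ℝ (fderiv ℝ (f α)) x).flip (∇ (f α) x)) x := by
  refine ((HasFDerivAt.fun_sum fun α _ => hasFDerivAt_norm_sq_gradient (hf α)).sqrt hx)
    |>.congr_fderiv ?_
  rw [← smul_sum, ← Nat.cast_smul_eq_nsmul ℝ, smul_smul]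
  congr 1
  push_cast
  field_simp

end Calculus

theorem refined_kato_harmonic_map_general (n m : ℕ)
    (U : Set (EuclideanSpace ℝ (Fin (n + 1)))) (hU : IsOpen U)
    (f : Fin m → EuclideanSpace ℝ (Fin (n + 1)) → ℝ)
    (hC2 : ∀ α, ContDiffOn ℝ 2 (f α) U)
    (hharm : ∀ α, ∀ y ∈ U,
      ∑ i, fderiv ℝ (fun z => fderiv ℝ (f α) z (EuclideanSpace.single i 1)) y
        (EuclideanSpace.single i 1) = 0)
    (x : EuclideanSpace ℝ (Fin (n + 1))) (hx : x ∈ U)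
    (hgrad : Real.sqrt (∑ α, ‖gradient (f α) x‖ ^ 2) ≠ 0) :
    DifferentiableAt ℝ (fun y => Real.sqrt (∑ α, ‖gradient (f α) y‖ ^ 2)) x ∧
      ‖gradient (fun y => Real.sqrt (∑ α, ‖gradient (f α) y‖ ^ 2)) x‖ ^ 2 ≤
        ((n : ℝ) / (n + 1)) *
          ∑ α, ∑ i, ∑ j,
            (fderiv ℝ (fun z => fderiv ℝ (f α) z (EuclideanSpace.single j 1)) x
              (EuclideanSpace.single i 1)) ^ 2 := by
  have hf2 α : ContDiffAt ℝ 2 (f α) x := (hC2 α).contDiffAt (hU.mem_nhds hx)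
  have hf α : DifferentiableAt ℝ (fderiv ℝ (f α)) x :=
    ((hf2 α).fderiv_right (m := 1) (by norm_num)).differentiableAt one_ne_zero
  have hD := hasFDerivAt_sqrt_sum_norm_sq_gradient hf (Real.sqrt_ne_zero'.mp hgrad).ne'
  refine ⟨hD.differentiableAt, ?_⟩
  have hsymm α : IsSymmSndFDerivAt ℝ (f α) x :=
    (hf2 α).isSymmSndFDerivAt (by simp [minSmoothness_of_isRCLikeNormedField])
  have hb := EuclideanSpace.basisFun_apply (Fin (n + 1)) ℝ
  have htr α : ∑ i, fderiv ℝ (fderiv ℝ (f α)) x (EuclideanSpace.basisFun _ ℝ i)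
      (EuclideanSpace.basisFun _ ℝ i) = 0 := by
    simpa [fderiv_fderiv_apply_apply (hf α)] using hharm α x hx
  simp only [fderiv_fderiv_apply_apply (hf _), ← hb]
  refine norm_sq_le_of_inner_eq_inv_sqrt_mul_sum (v := fun α => ∇ (f α) x) (by simp) _ hsymm htr
    fun w => ?_
  rw [hD.hasGradientAt.gradient, toDual_symm_apply]
  simp

/-- Flat-domain version of Lemma 2 (refined Kato inequality for harmonic maps):
for `f = (f^1, …, f^m)` with each component harmonic on an open set
`U ⊆ ℝ^{n+1}`, at each point where `|∇f| = (∑_α ‖∇f^α‖²)^{1/2} ≠ 0`, the function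
`|∇f|` is differentiable and `‖∇|∇f|‖² ≤ (n/(n+1)) |∇²f|²`, equivalently
`|∇²f|² ≥ (1 + 1/n) |∇|∇f||²`. -/
theorem refined_kato_harmonic_map (n m : ℕ) (hn : 1 ≤ n) (hm : 1 ≤ m)
    (U : Set (EuclideanSpace ℝ (Fin (n + 1)))) (hU : IsOpen U)
    (f : Fin m → EuclideanSpace ℝ (Fin (n + 1)) → ℝ)
    (hC2 : ∀ α, ContDiffOn ℝ 2 (f α) U)
    (hharm : ∀ α, ∀ y ∈ U,
      ∑ i, fderiv ℝ (fun z => fderiv ℝ (f α) z (EuclideanSpace.single i 1)) y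
        (EuclideanSpace.single i 1) = 0)
    (x : EuclideanSpace ℝ (Fin (n + 1))) (hx : x ∈ U)
    (hgrad : Real.sqrt (∑ α, ‖gradient (f α) x‖ ^ 2) ≠ 0) :
    DifferentiableAt ℝ (fun y => Real.sqrt (∑ α, ‖gradient (f α) y‖ ^ 2)) x ∧
      ‖gradient (fun y => Real.sqrt (∑ α, ‖gradient (f α) y‖ ^ 2)) x‖ ^ 2 ≤
        ((n : ℝ) / (n + 1)) *
          ∑ α, ∑ i, ∑ j,
            (fderiv ℝ (fun z => fderiv ℝ (f α) z (EuclideanSpace.single j 1)) x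
              (EuclideanSpace.single i 1)) ^ 2 :=
  refined_kato_harmonic_map_general n m U hU f hC2 hharm x hx hgrad
end

section
/- (Flat-domain version of the differential inequality for ζ = |∇f|^β in Section 3.) Let n ≥ 1, m ≥ 1, let U be an open subset of the Euclidean space ℝ^{n+1}, let f^1, …, f^m : ℝ^{n+1} → ℝ be C^∞ on U with each f^α harmonic on U, i.e. ∑_{i=0}^{n} ∂²f^α/∂x_i² = 0 at every point of U, and let e(y) = ∑_{α=1}^{m} ‖∇f^α(y)‖² be the energy density. Let β be a real number with 1/2 < β ≤ 1. Then at every point x ∈ U with e(x) ≠ 0, Δ(e^β)(x) ≥ (2/β)·(1/n + 2β − 1)·‖∇(e^{β/2})(x)‖², where Δ denotes the Euclidean Laplacian ∑_{i=0}^{n} ∂²/∂x_i². -/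
section helpers
variable {n : ℕ}
local notation "E" => EuclideanSpace ℝ (Fin (n + 1))

private theorem dia_norm_gradient_sq {d : ℕ} (u : EuclideanSpace ℝ (Fin d) → ℝ)
    (y : EuclideanSpace ℝ (Fin d)) :
    ‖gradient u y‖ ^ 2 = ∑ i, (fderiv ℝ u y (EuclideanSpace.single i 1)) ^ 2 := by
  have h1 : ∀ i, gradient u y i = fderiv ℝ u y (EuclideanSpace.single i 1) := by
    intro i
    have h2 : (inner ℝ (gradient u y) (EuclideanSpace.single i (1:ℝ)) : ℝ)
        = fderiv ℝ u y (EuclideanSpace.single i 1) := by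
      rw [gradient, InnerProductSpace.toDual_symm_apply]
    rw [EuclideanSpace.inner_single_right] at h2
    simpa using h2
  rw [← real_inner_self_eq_norm_sq, PiLp.inner_apply]
  simp [h1, sq]

private theorem dia_contDiffAt_fderiv_apply (u : E → ℝ) (y : E) (hu : ContDiffAt ℝ (⊤ : ℕ∞) u y)
    (v : E) : ContDiffAt ℝ (⊤ : ℕ∞) (fun z => fderiv ℝ u z v) y := by
  have h1 : ContDiffAt ℝ (⊤ : ℕ∞) (fderiv ℝ u) y := hu.fderiv_right (by simp)
  exact h1.clm_apply contDiffAt_const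

private theorem dia_fderiv_fderiv_apply (u : E → ℝ) (y : E) (hu : ContDiffAt ℝ (⊤ : ℕ∞) u y) (v w : E) :
    fderiv ℝ (fun z => fderiv ℝ u z v) y w = fderiv ℝ (fderiv ℝ u) y w v := by
  have h1 : DifferentiableAt ℝ (fderiv ℝ u) y :=
    (hu.fderiv_right (m := (⊤ : ℕ∞)) (by simp)).differentiableAt (by simp)
  rw [fderiv_clm_apply h1 (differentiableAt_const v)]
  simp

private theorem dia_fderiv_apply_symm (u : E → ℝ) (y : E) (hu : ContDiffAt ℝ (⊤ : ℕ∞) u y) (v w : E) :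
    fderiv ℝ (fun z => fderiv ℝ u z v) y w = fderiv ℝ (fun z => fderiv ℝ u z w) y v := by
  rw [dia_fderiv_fderiv_apply u y hu v w, dia_fderiv_fderiv_apply u y hu w v]
  exact (hu.isSymmSndFDerivAt (by rw [minSmoothness_of_isRCLikeNormedField]; norm_cast)) w v

private theorem dia_hasFDerivAt_sum_sq (m d' : ℕ) (p : Fin m → Fin d' → E → ℝ) (y : E)
    (hp : ∀ α i, DifferentiableAt ℝ (p α i) y) :
    HasFDerivAt (fun z => ∑ α, ∑ i, p α i z ^ 2)
      (∑ α, ∑ i, (p α i y • fderiv ℝ (p α i) y + p α i y • fderiv ℝ (p α i) y)) y := by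
  have hfun : (fun z => ∑ α, ∑ i, p α i z ^ 2)
      = fun z => ∑ α, ∑ i, p α i z * p α i z := by
    funext z
    exact Finset.sum_congr rfl fun α _ => Finset.sum_congr rfl fun i _ => pow_two _
  rw [hfun]
  apply HasFDerivAt.fun_sum
  intro α _
  apply HasFDerivAt.fun_sum
  intro i _
  exact (hp α i).hasFDerivAt.mul (hp α i).hasFDerivAt

private theorem dia_fderiv_sum_sq (m d' : ℕ) (p : Fin m → Fin d' → E → ℝ) (y : E)
    (hp : ∀ α i, DifferentiableAt ℝ (p α i) y) (w : E) :
    fderiv ℝ (fun z => ∑ α, ∑ i, p α i z ^ 2) y w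
      = ∑ α, ∑ i, 2 * (p α i y * fderiv ℝ (p α i) y w) := by
  rw [(dia_hasFDerivAt_sum_sq m d' p y hp).fderiv]
  rw [ContinuousLinearMap.sum_apply]
  refine Finset.sum_congr rfl fun α _ => ?_
  rw [ContinuousLinearMap.sum_apply]
  refine Finset.sum_congr rfl fun i _ => ?_
  rw [ContinuousLinearMap.add_apply, ContinuousLinearMap.smul_apply, smul_eq_mul]
  ring

private theorem dia_hasFDerivAt_rpow_comp (q : E → ℝ) (y : E) (hq : DifferentiableAt ℝ q y)
    (hpos : q y ≠ 0) (γ : ℝ) :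
    HasFDerivAt (fun z => q z ^ γ) ((γ * q y ^ (γ - 1)) • fderiv ℝ q y) y :=
  (Real.hasDerivAt_rpow_const (Or.inl hpos)).comp_hasFDerivAt y hq.hasFDerivAt

private theorem dia_fderiv_rpow_comp (q : E → ℝ) (y : E) (hq : DifferentiableAt ℝ q y)
    (hpos : q y ≠ 0) (γ : ℝ) (w : E) :
    fderiv ℝ (fun z => q z ^ γ) y w = γ * q y ^ (γ - 1) * fderiv ℝ q y w := by
  rw [(dia_hasFDerivAt_rpow_comp q y hq hpos γ).fderiv, ContinuousLinearMap.smul_apply,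
    smul_eq_mul]

end helpers

private theorem dia_katoAux (d : ℕ) (hd : 2 ≤ d) (H : Fin d → Fin d → ℝ)
    (hsymm : ∀ i j, H i j = H j i) (htr : ∑ i, H i i = 0)
    (g : Fin d → ℝ) (hg : ∑ j, g j ^ 2 = 1) :
    (d : ℝ) * ∑ i, (∑ j, H i j * g j) ^ 2 ≤ ((d : ℝ) - 1) * ∑ i, ∑ j, H i j ^ 2 := by
  have hd1 : (1:ℝ) ≤ (d:ℝ) - 1 := by
    have : (2:ℝ) ≤ d := by exact_mod_cast hd
    linarith
  have hdpos : (0:ℝ) < d := by positivity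
  have hdne : (d:ℝ) ≠ 0 := ne_of_gt hdpos
  have hd1ne : (d:ℝ) - 1 ≠ 0 := by linarith
  set a : ℝ := ∑ i, ∑ j, g i * H i j * g j with ha
  set u : Fin d → ℝ := fun i => ∑ j, H i j * g j with hu
  set w : Fin d → ℝ := fun i => u i - a * g i with hw
  set W : ℝ := ∑ i, w i ^ 2 with hWdef
  have hW : 0 ≤ W := Finset.sum_nonneg fun i _ => sq_nonneg _
  -- (1) ∑ g u = a
  have h1 : ∑ i, g i * u i = a := by
    rw [ha]
    refine Finset.sum_congr rfl fun i _ => ?_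
    rw [hu, Finset.mul_sum]
    exact Finset.sum_congr rfl fun j _ => by ring
  -- (2) ∑ w g = 0
  have h2 : ∑ i, w i * g i = 0 := by
    have : ∑ i, w i * g i = (∑ i, g i * u i) - a * ∑ i, g i ^ 2 := by
      rw [Finset.mul_sum, ← Finset.sum_sub_distrib]
      exact Finset.sum_congr rfl fun i _ => by simp [hw]; ring
    rw [this, h1, hg]; ring
  -- (3) ∑ w u = W
  have h3 : ∑ i, w i * u i = W := by
    have : ∑ i, w i * u i = (∑ i, w i ^ 2) + a * ∑ i, w i * g i := by
      rw [Finset.mul_sum, ← Finset.sum_add_distrib]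
      refine Finset.sum_congr rfl fun i _ => ?_
      have : u i = w i + a * g i := by simp [hw]
      rw [this]; ring
    rw [this, h2, hWdef]; ring
  -- column sums: ∑ i, H i j * g i = u j
  have hcol : ∀ j, ∑ i, H i j * g i = u j := by
    intro j
    rw [hu]
    exact Finset.sum_congr rfl fun i _ => by rw [hsymm i j]
  -- matrices A and B
  set A : Fin d → Fin d → ℝ := fun i j => g i * g j - (if i = j then (1:ℝ) else 0) / d with hA
  set B : Fin d → Fin d → ℝ := fun i j => g i * w j + w i * g j with hB
  -- (4) ⟨H, A⟩ = a
  have h4 : ∑ i, ∑ j, H i j * A i j = a := by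
    have hinner : ∀ i, ∑ j, H i j * A i j = (∑ j, g i * H i j * g j) - H i i / d := by
      intro i
      have step : ∑ j, H i j * A i j
          = (∑ j, g i * H i j * g j) - ∑ j, (if i = j then H i j else 0) / d := by
        rw [← Finset.sum_sub_distrib]
        refine Finset.sum_congr rfl fun j _ => ?_
        simp only [hA]
        by_cases h : i = j <;> simp [h] <;> ring
      rw [step, ← Finset.sum_div]
      simp [Finset.sum_ite_eq]
    rw [Finset.sum_congr rfl fun i _ => hinner i, Finset.sum_sub_distrib, ← Finset.sum_div, htr,
      ha]
    simp
  -- (5) ⟨H, B⟩ = 2W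
  have h5 : ∑ i, ∑ j, H i j * B i j = 2 * W := by
    have hinner : ∀ i, ∑ j, H i j * B i j
        = g i * (∑ j, H i j * w j) + w i * u i := by
      intro i
      rw [Finset.mul_sum, hu]
      dsimp only
      rw [Finset.mul_sum, ← Finset.sum_add_distrib]
      refine Finset.sum_congr rfl fun j _ => ?_
      simp only [hB]; ring
    rw [Finset.sum_congr rfl fun i _ => hinner i, Finset.sum_add_distrib]
    have hpart : ∑ i, g i * ∑ j, H i j * w j = W := by
      have : ∑ i, g i * ∑ j, H i j * w j = ∑ i, ∑ j, w j * (H i j * g i) := by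
        refine Finset.sum_congr rfl fun i _ => ?_
        rw [Finset.mul_sum]
        exact Finset.sum_congr rfl fun j _ => by ring
      rw [this, Finset.sum_comm]
      have : ∀ j, ∑ i, w j * (H i j * g i) = w j * u j := by
        intro j
        rw [← Finset.mul_sum, hcol]
      rw [Finset.sum_congr rfl fun j _ => this j, h3]
    rw [hpart, h3]; ring
  -- (6) ∑ A² = (d-1)/d
  have h6 : ∑ i, ∑ j, A i j ^ 2 = ((d:ℝ) - 1) / d := by
    have hinner : ∀ i, ∑ j, A i j ^ 2 = g i ^ 2 - 2 / d * (g i * g i) + 1 / d ^ 2 := by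
      intro i
      have step : ∀ j, A i j ^ 2 = g i ^ 2 * g j ^ 2
          - 2 / d * (if i = j then g i * g j else 0)
          + (if i = j then (1:ℝ) else 0) / d ^ 2 := by
        intro j
        simp only [hA]
        by_cases h : i = j <;> simp [h] <;> ring
      rw [Finset.sum_congr rfl fun j _ => step j, Finset.sum_add_distrib,
        Finset.sum_sub_distrib, ← Finset.mul_sum, hg, ← Finset.mul_sum, ← Finset.sum_div]
      simp [Finset.sum_ite_eq]
    rw [Finset.sum_congr rfl fun i _ => hinner i, Finset.sum_add_distrib,
      Finset.sum_sub_distrib, hg, ← Finset.mul_sum]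
    have e1 : ∑ i, g i * g i = 1 := by
      rw [← hg]; exact Finset.sum_congr rfl fun i _ => (sq (g i)).symm ▸ by ring
    rw [e1, Finset.sum_const]
    simp only [Finset.card_univ, Fintype.card_fin, nsmul_eq_mul]
    field_simp
    ring
  -- (7) ⟨A, B⟩ = 0
  have h7 : ∑ i, ∑ j, A i j * B i j = 0 := by
    have hgw : ∑ i, g i * w i = 0 := by
      rw [← h2]; exact Finset.sum_congr rfl fun i _ => by ring
    have hinner : ∀ i, ∑ j, A i j * B i j
        = g i ^ 2 * (∑ j, g j * w j) + g i * w i - 2 / d * (g i * w i) := by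
      intro i
      have step : ∀ j, A i j * B i j = g i ^ 2 * (g j * w j) + (g i * w i) * g j ^ 2
          - 2 / d * (if i = j then g i * w i else 0) := by
        intro j
        simp only [hA, hB]
        by_cases h : i = j <;> simp [h] <;> ring
      rw [Finset.sum_congr rfl fun j _ => step j, Finset.sum_sub_distrib,
        Finset.sum_add_distrib, ← Finset.mul_sum, ← Finset.mul_sum, hg, ← Finset.mul_sum]
      simp [Finset.sum_ite_eq]
    rw [Finset.sum_congr rfl fun i _ => hinner i, Finset.sum_sub_distrib,
      Finset.sum_add_distrib, hgw, ← Finset.mul_sum, hgw]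
    simp
  -- (8) ∑ B² = 2W
  have h8 : ∑ i, ∑ j, B i j ^ 2 = 2 * W := by
    have hgw : ∑ i, g i * w i = 0 := by
      rw [← h2]; exact Finset.sum_congr rfl fun i _ => by ring
    have hinner : ∀ i, ∑ j, B i j ^ 2
        = g i ^ 2 * W + 2 * (g i * w i) * (∑ j, g j * w j) + w i ^ 2 := by
      intro i
      have step : ∀ j, B i j ^ 2
          = g i ^ 2 * w j ^ 2 + 2 * (g i * w i) * (g j * w j) + w i ^ 2 * g j ^ 2 := by
        intro j; simp only [hB]; ring
      rw [Finset.sum_congr rfl fun j _ => step j, Finset.sum_add_distrib,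
        Finset.sum_add_distrib, ← Finset.mul_sum, ← Finset.mul_sum, ← Finset.mul_sum,
        ← hWdef, hg, mul_one]
    rw [Finset.sum_congr rfl fun i _ => hinner i, Finset.sum_add_distrib,
      Finset.sum_add_distrib, hgw, ← Finset.sum_mul, hg, ← hWdef]
    simp
    ring
  -- the expansion
  set c : ℝ := a * d / ((d:ℝ) - 1) with hc
  have key : (0:ℝ) ≤ ∑ i, ∑ j, (H i j - c * A i j - B i j) ^ 2 :=
    Finset.sum_nonneg fun i _ => Finset.sum_nonneg fun j _ => sq_nonneg _
  have hexpand : ∑ i, ∑ j, (H i j - c * A i j - B i j) ^ 2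
      = (∑ i, ∑ j, H i j ^ 2) + c ^ 2 * (∑ i, ∑ j, A i j ^ 2) + (∑ i, ∑ j, B i j ^ 2)
        - 2 * c * (∑ i, ∑ j, H i j * A i j) - 2 * (∑ i, ∑ j, H i j * B i j)
        + 2 * c * (∑ i, ∑ j, A i j * B i j) := by
    have step : ∀ i j, (H i j - c * A i j - B i j) ^ 2
        = H i j ^ 2 + c ^ 2 * A i j ^ 2 + B i j ^ 2
          - 2 * c * (H i j * A i j) - 2 * (H i j * B i j) + 2 * c * (A i j * B i j) := by
      intro i j; ring
    rw [Finset.sum_congr rfl fun i _ => Finset.sum_congr rfl fun j _ => step i j]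
    simp only [Finset.sum_add_distrib, Finset.sum_sub_distrib, ← Finset.mul_sum]
  rw [hexpand, h4, h5, h6, h7, h8] at key
  -- ∑ u² = W + a²
  have hu2 : ∑ i, u i ^ 2 = W + a ^ 2 := by
    have step : ∀ i, u i ^ 2 = w i ^ 2 + 2 * a * (w i * g i) + a ^ 2 * g i ^ 2 := by
      intro i
      have : u i = w i + a * g i := by simp [hw]
      rw [this]; ring
    rw [Finset.sum_congr rfl fun i _ => step i, Finset.sum_add_distrib,
      Finset.sum_add_distrib, ← Finset.mul_sum, h2, ← Finset.mul_sum, hg, ← hWdef]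
    ring
  -- final arithmetic
  have hSH : a ^ 2 * (d:ℝ) / ((d:ℝ) - 1) + 2 * W ≤ ∑ i, ∑ j, H i j ^ 2 := by
    have hcval : 2 * c * a - c ^ 2 * (((d:ℝ) - 1) / d) = a ^ 2 * (d:ℝ) / ((d:ℝ) - 1) := by
      rw [hc]; field_simp; ring
    linarith [key, hcval]
  have hgoal2 : ∑ i, u i ^ 2 = W + a ^ 2 := hu2
  have hfin : (d:ℝ) * (W + a ^ 2) ≤ ((d:ℝ) - 1) * (∑ i, ∑ j, H i j ^ 2) := by
    have h9 : ((d:ℝ) - 1) * (a ^ 2 * (d:ℝ) / ((d:ℝ) - 1) + 2 * W)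
        = (d:ℝ) * a ^ 2 + 2 * ((d:ℝ) - 1) * W := by
      field_simp
    have hmul := mul_le_mul_of_nonneg_left hSH (by linarith : (0:ℝ) ≤ (d:ℝ) - 1)
    rw [h9] at hmul
    have hdW : (d:ℝ) * W ≤ 2 * ((d:ℝ) - 1) * W := by nlinarith [hW, hd1]
    linarith [hmul, hdW]
  calc (d:ℝ) * ∑ i, (∑ j, H i j * g j) ^ 2 = (d:ℝ) * ∑ i, u i ^ 2 := by rw [hu]
    _ = (d:ℝ) * (W + a ^ 2) := by rw [hu2]
    _ ≤ ((d:ℝ) - 1) * ∑ i, ∑ j, H i j ^ 2 := hfin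

private theorem dia_kato (d : ℕ) (hd : 2 ≤ d) (H : Fin d → Fin d → ℝ)
    (hsymm : ∀ i j, H i j = H j i) (htr : ∑ i, H i i = 0) (g : Fin d → ℝ) :
    (d : ℝ) * ∑ i, (∑ j, H i j * g j) ^ 2
      ≤ ((d : ℝ) - 1) * (∑ i, ∑ j, H i j ^ 2) * (∑ j, g j ^ 2) := by
  set G : ℝ := ∑ j, g j ^ 2 with hG
  rcases eq_or_lt_of_le (Finset.sum_nonneg fun j _ => sq_nonneg (g j) : (0:ℝ) ≤ G) with h0 | hpos
  · have hz : ∀ j, g j = 0 := by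
      intro j
      have := (Finset.sum_eq_zero_iff_of_nonneg (fun j _ => sq_nonneg (g j))).mp h0.symm j
        (Finset.mem_univ j)
      exact pow_eq_zero_iff (by norm_num) |>.mp this
    have hz2 : ∀ i, (∑ j, H i j * g j) = 0 := fun i => Finset.sum_eq_zero fun j _ => by
      rw [hz j, mul_zero]
    simp [hz2, hz, hG]
  · set s : ℝ := Real.sqrt G with hs
    have hspos : 0 < s := Real.sqrt_pos.mpr hpos
    have hs2 : s ^ 2 = G := Real.sq_sqrt hpos.le
    have hnorm : ∑ j, (g j / s) ^ 2 = 1 := by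
      rw [Finset.sum_congr rfl fun j _ => div_pow (g j) s 2, ← Finset.sum_div, ← hG, ← hs2]
      field_simp
    have key := dia_katoAux d hd H hsymm htr (fun j => g j / s) hnorm
    have hrow : ∀ i, ∑ j, H i j * (g j / s) = (∑ j, H i j * g j) / s := by
      intro i
      rw [Finset.sum_div]
      exact Finset.sum_congr rfl fun j _ => (mul_div_assoc _ _ _).symm
    rw [Finset.sum_congr rfl fun i _ => by rw [hrow i]] at key
    have hsum : ∑ i, ((∑ j, H i j * g j) / s) ^ 2 = (∑ i, (∑ j, H i j * g j) ^ 2) / G := by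
      rw [← hs2, Finset.sum_congr rfl fun i _ => div_pow _ s 2, ← Finset.sum_div]
    rw [hsum] at key
    have hfin := mul_le_mul_of_nonneg_right key hpos.le
    calc (d:ℝ) * ∑ i, (∑ j, H i j * g j) ^ 2
        = (d:ℝ) * ((∑ i, (∑ j, H i j * g j) ^ 2) / G) * G := by
          field_simp
          exact (mul_div_cancel_right₀ _ hpos.ne').symm
      _ ≤ ((d:ℝ) - 1) * (∑ i, ∑ j, H i j ^ 2) * G := hfin

private theorem dia_katoSum (d m : ℕ) (H : Fin m → Fin d → Fin d → ℝ)
    (g : Fin m → Fin d → ℝ)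
    (hsymm : ∀ α i j, H α i j = H α j i) (htr : ∀ α, ∑ i, H α i i = 0)
    (hd : 2 ≤ d) :
    (d : ℝ) * ∑ i, (∑ α, ∑ j, H α i j * g α j) ^ 2
      ≤ ((d : ℝ) - 1) * (∑ α, ∑ i, ∑ j, H α i j ^ 2) * (∑ α, ∑ j, g α j ^ 2) := by
  have hdpos : (0:ℝ) < d := by positivity
  have hd1 : (0:ℝ) ≤ (d:ℝ) - 1 := by
    have : (2:ℝ) ≤ d := by exact_mod_cast hd
    linarith
  set u : Fin m → Fin d → ℝ := fun α i => ∑ j, H α i j * g α j with hu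
  set SH : Fin m → ℝ := fun α => ∑ i, ∑ j, H α i j ^ 2 with hSH
  set G : Fin m → ℝ := fun α => ∑ j, g α j ^ 2 with hG
  have hSHnn : ∀ α, 0 ≤ SH α := fun α =>
    Finset.sum_nonneg fun i _ => Finset.sum_nonneg fun j _ => sq_nonneg _
  have hGnn : ∀ α, 0 ≤ G α := fun α => Finset.sum_nonneg fun j _ => sq_nonneg _
  set c : ℝ := ((d:ℝ) - 1) / d with hc
  have hcnn : 0 ≤ c := div_nonneg hd1 hdpos.le
  set Uα : Fin m → ℝ := fun α => Real.sqrt (∑ i, u α i ^ 2) with hU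
  have hUnonneg : ∀ α, 0 ≤ Uα α := fun α => Real.sqrt_nonneg _
  have hUsq : ∀ α, Uα α ^ 2 = ∑ i, u α i ^ 2 := fun α =>
    Real.sq_sqrt (Finset.sum_nonneg fun i _ => sq_nonneg _)
  -- Minkowski
  have hmink : ∑ i, (∑ α, u α i) ^ 2 ≤ (∑ α, Uα α) ^ 2 := by
    have expand : ∑ i, (∑ α, u α i) ^ 2 = ∑ α, ∑ γ, ∑ i, u α i * u γ i := by
      have h : ∀ i, (∑ α, u α i) ^ 2 = ∑ α, ∑ γ, u α i * u γ i := by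
        intro i; rw [sq, Finset.sum_mul_sum]
      rw [Finset.sum_congr rfl fun i _ => h i, Finset.sum_comm]
      exact Finset.sum_congr rfl fun α _ => Finset.sum_comm
    have expand2 : (∑ α, Uα α) ^ 2 = ∑ α, ∑ γ, Uα α * Uα γ := by
      rw [sq, Finset.sum_mul_sum]
    rw [expand, expand2]
    refine Finset.sum_le_sum fun α _ => Finset.sum_le_sum fun γ _ => ?_
    have cs : (∑ i, u α i * u γ i) ^ 2 ≤ (Uα α * Uα γ) ^ 2 := by
      rw [mul_pow, hUsq, hUsq]
      exact Finset.sum_mul_sq_le_sq_mul_sq Finset.univ (u α) (u γ)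
    calc ∑ i, u α i * u γ i ≤ |∑ i, u α i * u γ i| := le_abs_self _
      _ = Real.sqrt ((∑ i, u α i * u γ i) ^ 2) := (Real.sqrt_sq_eq_abs _).symm
      _ ≤ Real.sqrt ((Uα α * Uα γ) ^ 2) := Real.sqrt_le_sqrt cs
      _ = Uα α * Uα γ := Real.sqrt_sq (mul_nonneg (hUnonneg α) (hUnonneg γ))
  -- per α Kato: Uα ≤ √c √SH √G
  have hUle : ∀ α, Uα α ≤ Real.sqrt c * (Real.sqrt (SH α) * Real.sqrt (G α)) := by
    intro α
    have h1 : ∑ i, u α i ^ 2 ≤ c * (SH α * G α) := by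
      have := dia_kato d hd (H α) (hsymm α) (htr α) (g α)
      rw [hc]; rw [div_mul_eq_mul_div, le_div_iff₀ hdpos]
      calc (∑ i, u α i ^ 2) * d = d * ∑ i, (∑ j, H α i j * g α j) ^ 2 := by rw [mul_comm, hu]
        _ ≤ ((d:ℝ) - 1) * (∑ i, ∑ j, H α i j ^ 2) * (∑ j, g α j ^ 2) := this
        _ = ((d:ℝ) - 1) * (SH α * G α) := by rw [hSH, hG]; ring
    calc Uα α = Real.sqrt (∑ i, u α i ^ 2) := by rw [hU]
      _ ≤ Real.sqrt (c * (SH α * G α)) := Real.sqrt_le_sqrt h1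
      _ = Real.sqrt c * (Real.sqrt (SH α) * Real.sqrt (G α)) := by
          rw [Real.sqrt_mul hcnn, Real.sqrt_mul (hSHnn α)]
  -- Cauchy-Schwarz over α
  have hCS : (∑ α, Real.sqrt (SH α) * Real.sqrt (G α)) ^ 2 ≤ (∑ α, SH α) * (∑ α, G α) := by
    have := Finset.sum_mul_sq_le_sq_mul_sq Finset.univ (fun α => Real.sqrt (SH α))
      (fun α => Real.sqrt (G α))
    simpa [Real.sq_sqrt, hSHnn, hGnn] using this
  -- combine
  have hT : 0 ≤ ∑ α, Real.sqrt (SH α) * Real.sqrt (G α) :=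
    Finset.sum_nonneg fun α _ => mul_nonneg (Real.sqrt_nonneg _) (Real.sqrt_nonneg _)
  have step1 : (∑ α, Uα α) ^ 2 ≤ c * ((∑ α, SH α) * (∑ α, G α)) := by
    have h2 : ∑ α, Uα α ≤ Real.sqrt c * ∑ α, Real.sqrt (SH α) * Real.sqrt (G α) := by
      rw [Finset.mul_sum]
      exact Finset.sum_le_sum fun α _ => hUle α
    have h3 : (∑ α, Uα α) ^ 2 ≤ (Real.sqrt c * ∑ α, Real.sqrt (SH α) * Real.sqrt (G α)) ^ 2 :=
      pow_le_pow_left₀ (Finset.sum_nonneg fun α _ => hUnonneg α) h2 2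
    calc (∑ α, Uα α) ^ 2 ≤ (Real.sqrt c * ∑ α, Real.sqrt (SH α) * Real.sqrt (G α)) ^ 2 := h3
      _ = c * (∑ α, Real.sqrt (SH α) * Real.sqrt (G α)) ^ 2 := by
          rw [mul_pow, Real.sq_sqrt hcnn]
      _ ≤ c * ((∑ α, SH α) * (∑ α, G α)) := by
          exact mul_le_mul_of_nonneg_left hCS hcnn
  have final : ∑ i, (∑ α, u α i) ^ 2 ≤ c * ((∑ α, SH α) * (∑ α, G α)) :=
    le_trans hmink step1
  have := mul_le_mul_of_nonneg_left final hdpos.le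
  calc (d:ℝ) * ∑ i, (∑ α, ∑ j, H α i j * g α j) ^ 2
      = (d:ℝ) * ∑ i, (∑ α, u α i) ^ 2 := by rw [hu]
    _ ≤ (d:ℝ) * (c * ((∑ α, SH α) * (∑ α, G α))) := this
    _ = ((d : ℝ) - 1) * (∑ α, ∑ i, ∑ j, H α i j ^ 2) * (∑ α, ∑ j, g α j ^ 2) := by
        rw [hc, hSH, hG]
        field_simp



/-- Flat-domain version of the differential inequality for `ζ = |∇f|^β` from
Section 3: if `f^1, …, f^m` are smooth and harmonic on an open set
`U ⊆ ℝ^{n+1}` with energy density `e = ∑_α ‖∇f^α‖²`, and `1/2 < β ≤ 1`, then at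
every point where `e ≠ 0`,
`Δ(e^β) ≥ (2/β)(1/n + 2β − 1) ‖∇(e^{β/2})‖²`. -/
theorem differential_inequality_energy_power (n m : ℕ) (hn : 1 ≤ n) (hm : 1 ≤ m)
    (U : Set (EuclideanSpace ℝ (Fin (n + 1)))) (hU : IsOpen U)
    (f : Fin m → EuclideanSpace ℝ (Fin (n + 1)) → ℝ)
    (hsmooth : ∀ α, ContDiffOn ℝ (⊤ : ℕ∞) (f α) U)
    (hharm : ∀ α, ∀ y ∈ U,
      ∑ i, fderiv ℝ (fun z => fderiv ℝ (f α) z (EuclideanSpace.single i 1)) y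
        (EuclideanSpace.single i 1) = 0)
    (e : EuclideanSpace ℝ (Fin (n + 1)) → ℝ)
    (he : e = fun y => ∑ α, ‖gradient (f α) y‖ ^ 2)
    (β : ℝ) (hβ₁ : 1 / 2 < β) (hβ₂ : β ≤ 1)
    (x : EuclideanSpace ℝ (Fin (n + 1))) (hx : x ∈ U) (hex : e x ≠ 0) :
    (2 / β) * (1 / (n : ℝ) + 2 * β - 1) *
        ‖gradient (fun z => e z ^ (β / 2)) x‖ ^ 2 ≤
      ∑ i, fderiv ℝ (fun z => fderiv ℝ (fun w => e w ^ β) z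
        (EuclideanSpace.single i 1)) x (EuclideanSpace.single i 1) := by
  have hβpos : 0 < β := by linarith
  -- basic notation
  set b : Fin (n + 1) → EuclideanSpace ℝ (Fin (n + 1)) :=
    fun i => EuclideanSpace.single i (1:ℝ) with hb
  set p : Fin m → Fin (n + 1) → EuclideanSpace ℝ (Fin (n + 1)) → ℝ :=
    fun α j z => fderiv ℝ (f α) z (b j) with hp
  -- smoothness of f at points of U
  have hfC : ∀ α, ∀ y ∈ U, ContDiffAt ℝ (⊤ : ℕ∞) (f α) y := fun α y hy =>
    (hsmooth α).contDiffAt (hU.mem_nhds hy)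
  have hpC : ∀ α j, ∀ y ∈ U, ContDiffAt ℝ (⊤ : ℕ∞) (p α j) y := fun α j y hy =>
    dia_contDiffAt_fderiv_apply (f α) y (hfC α y hy) (b j)
  have hpd : ∀ α j, ∀ y ∈ U, DifferentiableAt ℝ (p α j) y := fun α j y hy =>
    (hpC α j y hy).differentiableAt (by simp)
  -- e as sum of squares
  have he2 : e = fun z => ∑ α, ∑ j, p α j z ^ 2 := by
    rw [he]
    funext z
    exact Finset.sum_congr rfl fun α _ => dia_norm_gradient_sq (f α) z
  -- second derivatives
  set HF : Fin m → Fin (n + 1) → Fin (n + 1) → EuclideanSpace ℝ (Fin (n + 1)) → ℝ :=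
    fun α i j z => fderiv ℝ (p α j) z (b i) with hHF
  have hHFsymm : ∀ α i j, ∀ y ∈ U, HF α i j y = HF α j i y := by
    intro α i j y hy
    exact dia_fderiv_apply_symm (f α) y (hfC α y hy) (b j) (b i)
  have hHFC : ∀ α i j, ∀ y ∈ U, ContDiffAt ℝ (⊤ : ℕ∞) (HF α i j) y := fun α i j y hy =>
    dia_contDiffAt_fderiv_apply (p α j) y (hpC α j y hy) (b i)
  have hHFd : ∀ α i j, ∀ y ∈ U, DifferentiableAt ℝ (HF α i j) y := fun α i j y hy =>
    (hHFC α i j y hy).differentiableAt (by simp)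
  -- first derivative of e
  have hediff : ∀ y ∈ U, DifferentiableAt ℝ e y := by
    intro y hy
    rw [he2]
    refine DifferentiableAt.fun_sum fun α _ => DifferentiableAt.fun_sum fun j _ => ?_
    exact (hpd α j y hy).pow 2
  have heC : ∀ y ∈ U, ContDiffAt ℝ (⊤ : ℕ∞) e y := by
    intro y hy
    rw [he2]
    refine ContDiffAt.sum fun α _ => ContDiffAt.sum fun j _ => ?_
    exact (hpC α j y hy).pow 2
  set De : Fin (n + 1) → EuclideanSpace ℝ (Fin (n + 1)) → ℝ :=
    fun i z => fderiv ℝ e z (b i) with hDe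
  have hDeval : ∀ y ∈ U, ∀ i, De i y = ∑ α, ∑ k, 2 * (p α k y * HF α i k y) := by
    intro y hy i
    rw [hDe]
    dsimp only
    rw [he2]
    exact dia_fderiv_sum_sq m (n+1) p y (fun α j => hpd α j y hy) (b i)
  have hDeC : ∀ i, ∀ y ∈ U, ContDiffAt ℝ (⊤ : ℕ∞) (De i) y := fun i y hy =>
    dia_contDiffAt_fderiv_apply e y (heC y hy) (b i)
  have hDed : ∀ i, ∀ y ∈ U, DifferentiableAt ℝ (De i) y := fun i y hy =>
    (hDeC i y hy).differentiableAt (by simp)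
  -- positivity of e at x and nearby
  have hepos : 0 < e x := by
    have h0 : (0:ℝ) ≤ e x := by
      rw [he2]
      exact Finset.sum_nonneg fun α _ => Finset.sum_nonneg fun j _ => sq_nonneg _
    rcases lt_or_eq_of_le h0 with h | h
    · exact h
    · exact absurd h.symm hex
  have hev : ∀ᶠ z in nhds x, z ∈ U ∧ 0 < e z := by
    have h1 : ∀ᶠ z in nhds x, z ∈ U := hU.eventually_mem hx
    have h2 : ∀ᶠ z in nhds x, 0 < e z :=
      (hediff x hx).continuousAt.eventually_mem (Ioi_mem_nhds hepos)
    exact h1.and h2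
  -- pointwise data
  set g0 : Fin m → Fin (n + 1) → ℝ := fun α j => p α j x with hg0
  set Hm : Fin m → Fin (n + 1) → Fin (n + 1) → ℝ := fun α i j => HF α i j x with hHm
  set v : Fin (n + 1) → ℝ := fun i => De i x with hv
  set G0 : ℝ := e x with hG0
  set Hsq : ℝ := ∑ α, ∑ i, ∑ j, Hm α i j ^ 2 with hHsq
  set V : ℝ := ∑ i, v i ^ 2 with hV
  have hHsymm : ∀ α i j, Hm α i j = Hm α j i := fun α i j => hHFsymm α i j x hx
  have htr : ∀ α, ∑ i, Hm α i i = 0 := fun α => hharm α x hx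
  have hG0eq : G0 = ∑ α, ∑ j, g0 α j ^ 2 := by
    rw [hG0, he2]
  have hvval : ∀ i, v i = ∑ α, ∑ k, 2 * (g0 α k * Hm α i k) := fun i => hDeval x hx i
  have hHsqnn : 0 ≤ Hsq :=
    Finset.sum_nonneg fun α _ => Finset.sum_nonneg fun i _ =>
      Finset.sum_nonneg fun j _ => sq_nonneg _
  have hVnn : 0 ≤ V := Finset.sum_nonneg fun i _ => sq_nonneg _
  -- Kato inequality
  have hkatoS := dia_katoSum (n + 1) m Hm g0 hHsymm htr (by omega)
  have hcast : ((n + 1 : ℕ) : ℝ) = (n : ℝ) + 1 := by push_cast; ring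
  rw [hcast] at hkatoS
  have hvi2 : ∀ i, v i = 2 * ∑ α, ∑ j, Hm α i j * g0 α j := by
    intro i
    rw [hvval i, Finset.mul_sum]
    refine Finset.sum_congr rfl fun α _ => ?_
    rw [Finset.mul_sum]
    exact Finset.sum_congr rfl fun j _ => by ring
  have hVK : V = 4 * ∑ i, (∑ α, ∑ j, Hm α i j * g0 α j) ^ 2 := by
    rw [hV, Finset.mul_sum]
    exact Finset.sum_congr rfl fun i _ => by rw [hvi2 i]; ring
  have hVbound : ((n:ℝ) + 1) * V ≤ 4 * ((n:ℝ) * (Hsq * G0)) := by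
    have h4 := mul_le_mul_of_nonneg_left hkatoS (by norm_num : (0:ℝ) ≤ 4)
    calc ((n:ℝ) + 1) * V = 4 * (((n:ℝ) + 1) * ∑ i, (∑ α, ∑ j, Hm α i j * g0 α j) ^ 2) := by
          rw [hVK]; ring
      _ ≤ 4 * (((n:ℝ) + 1 - 1) * (∑ α, ∑ i, ∑ j, Hm α i j ^ 2) * (∑ α, ∑ j, g0 α j ^ 2)) := h4
      _ = 4 * ((n:ℝ) * (Hsq * G0)) := by rw [← hHsq, ← hG0eq]; ring
  have hene : e x ≠ 0 := by rw [hG0] at hex; exact hex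
  have heposx : 0 < e x := by rw [hG0] at hepos; exact hepos
  -- LHS: gradient of e^(β/2)
  have hfoldv : ∀ i, fderiv ℝ e x (b i) = v i := by
    intro i; simp only [hv, hDe]
  have hLHSi : ∀ i, fderiv ℝ (fun z => e z ^ (β / 2)) x (b i)
      = β / 2 * e x ^ (β / 2 - 1) * v i := by
    intro i
    rw [dia_fderiv_rpow_comp e x (hediff x hx) hene (β / 2) (b i), hfoldv i]
  have hpowh : (e x ^ (β / 2 - 1) : ℝ) ^ 2 = e x ^ (β - 2) := by
    rw [← Real.rpow_natCast (e x ^ (β / 2 - 1)) 2, ← Real.rpow_mul heposx.le]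
    congr 1
    push_cast; ring
  have hLHS : ‖gradient (fun z => e z ^ (β / 2)) x‖ ^ 2 = (β / 2) ^ 2 * e x ^ (β - 2) * V := by
    rw [dia_norm_gradient_sq (fun z => e z ^ (β / 2)) x, hV, Finset.mul_sum]
    refine Finset.sum_congr rfl fun i _ => ?_
    have hbi : (EuclideanSpace.single i (1:ℝ)) = b i := by rw [hb]
    rw [hbi, hLHSi i]
    rw [mul_pow, mul_pow, hpowh]
  -- third-derivative trace vanishing
  have hTTsum : ∀ α k, ∑ i, fderiv ℝ (HF α i k) x (b i) = 0 := by
    intro α k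
    have step1 : ∀ i, fderiv ℝ (HF α i k) x (b i)
        = fderiv ℝ (fun z => fderiv ℝ (p α i) z (b k)) x (b i) := by
      intro i
      have hev1 : HF α i k =ᶠ[nhds x] fun z => fderiv ℝ (p α i) z (b k) := by
        filter_upwards [hU.eventually_mem hx] with z hz
        simp only [hHF, hp]
        exact dia_fderiv_apply_symm (f α) z (hfC α z hz) (b k) (b i)
      rw [hev1.fderiv_eq]
    have step2 : ∀ i, fderiv ℝ (fun z => fderiv ℝ (p α i) z (b k)) x (b i)
        = fderiv ℝ (HF α i i) x (b k) := by
      intro i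
      rw [dia_fderiv_apply_symm (p α i) x (hpC α i x hx) (b k) (b i)]
    have step3 : ∑ i, fderiv ℝ (HF α i i) x (b k)
        = fderiv ℝ (fun z => ∑ i, HF α i i z) x (b k) := by
      rw [fderiv_fun_sum (fun i _ => hHFd α i i x hx)]
      rw [ContinuousLinearMap.sum_apply]
    have step4 : fderiv ℝ (fun z => ∑ i, HF α i i z) x = 0 := by
      have hev0 : (fun z => ∑ i, HF α i i z) =ᶠ[nhds x] fun _ => (0:ℝ) := by
        filter_upwards [hU.eventually_mem hx] with z hz
        simp only [hHF, hp]
        exact hharm α z hz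
      rw [hev0.fderiv_eq]
      exact fderiv_const_apply 0
    calc ∑ i, fderiv ℝ (HF α i k) x (b i)
        = ∑ i, fderiv ℝ (HF α i i) x (b k) := by
          exact Finset.sum_congr rfl fun i _ => by rw [step1 i, step2 i]
      _ = fderiv ℝ (fun z => ∑ i, HF α i i z) x (b k) := step3
      _ = 0 := by rw [step4]; rfl
  -- second derivative of De i
  have hSi : ∀ i, fderiv ℝ (De i) x (b i)
      = ∑ α, ∑ k, 2 * (g0 α k * fderiv ℝ (HF α i k) x (b i) + Hm α i k * Hm α i k) := by
    intro i
    have hevDe : De i =ᶠ[nhds x] fun z => ∑ α, ∑ k, 2 * (p α k z * HF α i k z) := by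
      filter_upwards [hU.eventually_mem hx] with z hz
      exact hDeval z hz i
    rw [hevDe.fderiv_eq]
    have hder : HasFDerivAt (fun z => ∑ α, ∑ k, 2 * (p α k z * HF α i k z))
        (∑ α, ∑ k, (2:ℝ) • (p α k x • fderiv ℝ (HF α i k) x + HF α i k x • fderiv ℝ (p α k) x))
        x := by
      apply HasFDerivAt.fun_sum
      intro α _
      apply HasFDerivAt.fun_sum
      intro k _
      exact ((hpd α k x hx).hasFDerivAt.mul (hHFd α i k x hx).hasFDerivAt).const_mul 2
    rw [hder.fderiv, ContinuousLinearMap.sum_apply]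
    refine Finset.sum_congr rfl fun α _ => ?_
    rw [ContinuousLinearMap.sum_apply]
    refine Finset.sum_congr rfl fun k _ => ?_
    rw [ContinuousLinearMap.smul_apply, ContinuousLinearMap.add_apply,
      ContinuousLinearMap.smul_apply, ContinuousLinearMap.smul_apply]
    have hfold1 : fderiv ℝ (p α k) x (b i) = Hm α i k := by simp only [hHm, hHF]
    have hfold2 : p α k x = g0 α k := by simp only [hg0]
    have hfold3 : HF α i k x = Hm α i k := by simp only [hHm]
    rw [hfold1, hfold2, hfold3]
    simp only [smul_eq_mul]
  -- outer second derivative of e^β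
  have hOuter : ∀ i, fderiv ℝ (fun z => fderiv ℝ (fun w => e w ^ β) z (b i)) x (b i)
      = β * ((β - 1) * e x ^ (β - 1 - 1) * v i * v i
          + e x ^ (β - 1) * fderiv ℝ (De i) x (b i)) := by
    intro i
    have hevEq : (fun z => fderiv ℝ (fun w => e w ^ β) z (b i))
        =ᶠ[nhds x] fun z => β * (e z ^ (β - 1) * De i z) := by
      filter_upwards [hev] with z hz
      rw [dia_fderiv_rpow_comp e z (hediff z hz.1) (ne_of_gt hz.2) β (b i)]
      simp only [hDe]
      ring
    rw [hevEq.fderiv_eq]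
    have hρ := dia_hasFDerivAt_rpow_comp e x (hediff x hx) hene (β - 1)
    have hmul := (hρ.fun_mul (hDed i x hx).hasFDerivAt).const_mul β
    rw [hmul.fderiv]
    rw [ContinuousLinearMap.smul_apply, ContinuousLinearMap.add_apply,
      ContinuousLinearMap.smul_apply, ContinuousLinearMap.smul_apply,
      ContinuousLinearMap.smul_apply]
    simp only [smul_eq_mul]
    rw [hfoldv i]
    have hvv : De i x = v i := by simp only [hv]
    rw [hvv]
    ring
  -- sum of second derivatives of De
  have hSsum : ∑ i, fderiv ℝ (De i) x (b i) = 2 * Hsq := by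
    have h1 : ∀ i, fderiv ℝ (De i) x (b i)
        = (∑ α, ∑ k, 2 * (g0 α k * fderiv ℝ (HF α i k) x (b i)))
          + ∑ α, ∑ k, 2 * (Hm α i k * Hm α i k) := by
      intro i
      rw [hSi i, ← Finset.sum_add_distrib]
      refine Finset.sum_congr rfl fun α _ => ?_
      rw [← Finset.sum_add_distrib]
      exact Finset.sum_congr rfl fun k _ => by ring
    rw [Finset.sum_congr rfl fun i _ => h1 i, Finset.sum_add_distrib]
    have h2 : ∑ i, ∑ α, ∑ k, 2 * (g0 α k * fderiv ℝ (HF α i k) x (b i)) = 0 := by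
      rw [Finset.sum_comm]
      refine Finset.sum_eq_zero fun α _ => ?_
      rw [Finset.sum_comm]
      refine Finset.sum_eq_zero fun k _ => ?_
      have h2a : ∀ i, 2 * (g0 α k * fderiv ℝ (HF α i k) x (b i))
          = (2 * g0 α k) * fderiv ℝ (HF α i k) x (b i) := fun i => by ring
      rw [Finset.sum_congr rfl fun i _ => h2a i, ← Finset.mul_sum, hTTsum α k, mul_zero]
    have h3 : ∑ i, ∑ α, ∑ k, 2 * (Hm α i k * Hm α i k) = 2 * Hsq := by
      rw [Finset.sum_comm, hHsq, Finset.mul_sum]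
      refine Finset.sum_congr rfl fun α _ => ?_
      rw [Finset.mul_sum]
      refine Finset.sum_congr rfl fun i _ => ?_
      rw [Finset.mul_sum]
      exact Finset.sum_congr rfl fun k _ => by rw [pow_two]
    rw [h2, h3, zero_add]
  -- total RHS
  have hRHS : ∑ i, fderiv ℝ (fun z => fderiv ℝ (fun w => e w ^ β) z (b i)) x (b i)
      = β * (β - 1) * e x ^ (β - 1 - 1) * V + β * e x ^ (β - 1) * (2 * Hsq) := by
    rw [Finset.sum_congr rfl fun i _ => hOuter i]
    have h4 : ∀ i, β * ((β - 1) * e x ^ (β - 1 - 1) * v i * v i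
        + e x ^ (β - 1) * fderiv ℝ (De i) x (b i))
        = β * (β - 1) * e x ^ (β - 1 - 1) * (v i * v i)
          + β * e x ^ (β - 1) * fderiv ℝ (De i) x (b i) := fun i => by ring
    rw [Finset.sum_congr rfl fun i _ => h4 i, Finset.sum_add_distrib, ← Finset.mul_sum,
      ← Finset.mul_sum, hSsum]
    congr 1
    rw [hV]
    congr 1
    exact Finset.sum_congr rfl fun i _ => (pow_two _).symm
  -- assemble
  simp only [hb] at hRHS
  rw [hRHS, hLHS]
  have hdavid : e x ^ (β - 1) = e x ^ (β - 2) * e x := by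
    rw [show β - 1 = (β - 2) + 1 from by ring, Real.rpow_add_one hene]
  rw [show β - 1 - 1 = β - 2 from by ring, hdavid]
  rw [hG0] at hVbound
  have hNpos : (0:ℝ) < (n:ℝ) := by
    have : (1:ℝ) ≤ (n:ℝ) := by exact_mod_cast hn
    linarith
  have hβne : β ≠ 0 := ne_of_gt hβpos
  have hE2pos : (0:ℝ) < e x ^ (β - 2) := Real.rpow_pos_of_pos heposx _
  have key : (β / 2) * (1 / (n:ℝ) + 2 * β - 1) * V ≤ β * (β - 1) * V + 2 * β * (e x * Hsq) := by
    have h2 : (β / 2) * (1 / (n:ℝ) + 2 * β - 1) * V - β * (β - 1) * V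
        = (β * ((n:ℝ) + 1) / (2 * (n:ℝ))) * V := by
      field_simp
      ring
    have h3 : (β * ((n:ℝ) + 1) / (2 * (n:ℝ))) * V ≤ 2 * β * (e x * Hsq) := by
      have hc : (0:ℝ) ≤ β / (2 * (n:ℝ)) := by positivity
      calc (β * ((n:ℝ) + 1) / (2 * (n:ℝ))) * V
          = (β / (2 * (n:ℝ))) * (((n:ℝ) + 1) * V) := by ring
        _ ≤ (β / (2 * (n:ℝ))) * (4 * ((n:ℝ) * (Hsq * e x))) :=
            mul_le_mul_of_nonneg_left hVbound hc
        _ = 2 * β * (e x * Hsq) := by field_simp; ring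
    linarith
  calc (2 / β) * (1 / (n:ℝ) + 2 * β - 1) * ((β / 2) ^ 2 * e x ^ (β - 2) * V)
      = ((β / 2) * (1 / (n:ℝ) + 2 * β - 1) * V) * (e x ^ (β - 2)) := by
        field_simp
    _ ≤ (β * (β - 1) * V + 2 * β * (e x * Hsq)) * (e x ^ (β - 2)) :=
        mul_le_mul_of_nonneg_right key hE2pos.le
    _ = β * (β - 1) * e x ^ (β - 2) * V + β * (e x ^ (β - 2) * e x) * (2 * Hsq) := by
        ring
end

section
/- (Comparison step in the proof of Lemma 1.) Let n ≥ 2 be an integer, let C₁ > 0 and T > 0 be real numbers, and set t₂ = min(T, 1/(2C₁)). Let F, G : ℝ → ℝ be differentiable on (0, T) with F(t) ≥ 0 for all t ∈ (0, T), F(t) → 0 and G(t) → 0 as t → 0⁺, and suppose that for all t ∈ (0, T): (n − C₁ t)·F(t) + (n − 2 − 3C₁ t)·G(t) ≤ t·F′(t) − t·G′(t). Then G(t) ≤ F(t) for all t ∈ (0, t₂). -/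
/-!
Put `H = G - F`. Substituting `G = H + F` into the hypothesis and discarding the term
`(2n - 2 - 4C₁t) F ≥ 0` (nonnegative because `2C₁t < 1`) leaves the linear differential
inequality `t H' + (n - 2 - 3C₁t) H ≤ 0`. With the integrating factor `t ^ (n - 2) e^{-3C₁t}`
this says that `t ^ (n - 2) e^{-3C₁t} H` is antitone on `(0, t₂)`; it tends to `0` at `0⁺`,
so it is nonpositive, and hence so is `H`.
-/

open Set Filter Topology Real

theorem nonpos_of_antitoneOn_Ioo_of_tendsto_nhdsGT {ψ : ℝ → ℝ} {a : ℝ}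
    (hψ : AntitoneOn ψ (Ioo 0 a)) (hψ0 : Tendsto ψ (𝓝[>] 0) (𝓝 0)) :
    ∀ t ∈ Ioo 0 a, ψ t ≤ 0 := by
  intro t ht
  refine ge_of_tendsto hψ0 ?_
  filter_upwards [Ioo_mem_nhdsGT ht.1] with s hs
  exact hψ ⟨hs.1, hs.2.trans ht.2⟩ ht hs.2.le

theorem hasDerivAt_rpow_mul_exp_mul {H : ℝ → ℝ} {h' p c s : ℝ} (hs : s ≠ 0)
    (hH : HasDerivAt H h' s) :
    HasDerivAt (fun x => x ^ p * exp (-(c * x)) * H x)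
      (s ^ (p - 1) * exp (-(c * s)) * (s * h' + (p - c * s) * H s)) s := by
  have hexp : HasDerivAt (fun x => exp (-(c * x))) (exp (-(c * s)) * -c) s := by
    simpa using ((hasDerivAt_id s).const_mul c).neg.exp
  refine (((hasDerivAt_rpow_const (p := p) (Or.inl hs)).mul hexp).mul hH).congr_deriv ?_
  simp only [Pi.mul_apply]
  rw [show s ^ p = s ^ (p - 1) * s by rw [← rpow_add_one hs, sub_add_cancel]]
  ring

theorem nonpos_of_mul_deriv_add_mul_nonpos {H : ℝ → ℝ} {p c a : ℝ} (hp : 0 ≤ p)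
    (hH : ∀ t ∈ Ioo 0 a, DifferentiableAt ℝ H t) (hH0 : Tendsto H (𝓝[>] 0) (𝓝 0))
    (hineq : ∀ t ∈ Ioo 0 a, t * deriv H t + (p - c * t) * H t ≤ 0) :
    ∀ t ∈ Ioo 0 a, H t ≤ 0 := by
  set ψ : ℝ → ℝ := fun x => x ^ p * exp (-(c * x)) * H x
  have hderiv : ∀ t ∈ Ioo 0 a, HasDerivAt ψ
      (t ^ (p - 1) * exp (-(c * t)) * (t * deriv H t + (p - c * t) * H t)) t :=
    fun t ht => hasDerivAt_rpow_mul_exp_mul ht.1.ne' (hH t ht).hasDerivAt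
  have hanti : AntitoneOn ψ (Ioo 0 a) := by
    refine antitoneOn_of_deriv_nonpos (convex_Ioo 0 a)
      (fun t ht => (hderiv t ht).continuousAt.continuousWithinAt)
      (fun t ht => ?_) (fun t ht => ?_) <;> rw [interior_Ioo] at ht
    · exact (hderiv t ht).differentiableAt.differentiableWithinAt
    · rw [(hderiv t ht).deriv]
      exact mul_nonpos_of_nonneg_of_nonpos (by have := ht.1; positivity) (hineq t ht)
  have hψ0 : Tendsto ψ (𝓝[>] 0) (𝓝 0) := by
    have hfactor : ContinuousAt (fun x : ℝ => x ^ p * exp (-(c * x))) 0 :=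
      (continuousAt_rpow_const 0 p (Or.inr hp)).mul (by fun_prop)
    simpa using (hfactor.tendsto.mono_left nhdsWithin_le_nhds).mul hH0
  intro t ht
  have hpos : 0 < t ^ p * exp (-(c * t)) := mul_pos (rpow_pos_of_pos ht.1 p) (exp_pos _)
  exact nonpos_of_mul_nonpos_right (nonpos_of_antitoneOn_Ioo_of_tendsto_nhdsGT hanti hψ0 t ht)
    hpos

theorem lemma1_comparison_step_general (n : ℕ) (hn : 2 ≤ n) (C₁ T : ℝ)
    (hC₁ : 0 < C₁) (F G : ℝ → ℝ)
    (hF : ∀ t ∈ Set.Ioo (0 : ℝ) T, DifferentiableAt ℝ F t)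
    (hG : ∀ t ∈ Set.Ioo (0 : ℝ) T, DifferentiableAt ℝ G t)
    (hFpos : ∀ t ∈ Set.Ioo (0 : ℝ) T, 0 ≤ F t)
    (hF0 : Filter.Tendsto F (nhdsWithin 0 (Set.Ioi 0)) (nhds 0))
    (hG0 : Filter.Tendsto G (nhdsWithin 0 (Set.Ioi 0)) (nhds 0))
    (hineq : ∀ t ∈ Set.Ioo (0 : ℝ) T,
      ((n : ℝ) - C₁ * t) * F t + ((n : ℝ) - 2 - 3 * C₁ * t) * G t ≤
        t * deriv F t - t * deriv G t) :
    ∀ t ∈ Set.Ioo (0 : ℝ) (min T (1 / (2 * C₁))), G t ≤ F t := by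
  have hn' : (2 : ℝ) ≤ n := by exact_mod_cast hn
  have hIoo : ∀ t ∈ Ioo 0 (min T (1 / (2 * C₁))), t ∈ Ioo 0 T ∧ 2 * C₁ * t < 1 := by
    intro t ht
    refine ⟨⟨ht.1, ht.2.trans_le (min_le_left _ _)⟩, ?_⟩
    have := ht.2.trans_le (min_le_right _ _)
    rwa [lt_div_iff₀ (by positivity), mul_comm] at this
  have hlinear : ∀ t ∈ Ioo 0 (min T (1 / (2 * C₁))),
      t * deriv (G - F) t + ((n - 2 : ℝ) - 3 * C₁ * t) * (G - F) t ≤ 0 := by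
    intro t ht
    obtain ⟨htT, hsmall⟩ := hIoo t ht
    rw [deriv_sub (hG t htT) (hF t htT)]
    have hFterm : 0 ≤ (2 * (n : ℝ) - 2 - 4 * C₁ * t) * F t :=
      mul_nonneg (by linarith) (hFpos t htT)
    simp only [Pi.sub_apply]
    linarith [hineq t htT]
  have hdiff : ∀ t ∈ Ioo 0 (min T (1 / (2 * C₁))), DifferentiableAt ℝ (G - F) t :=
    fun t ht => (hG t (hIoo t ht).1).sub (hF t (hIoo t ht).1)
  have hlim : Tendsto (G - F) (𝓝[>] 0) (𝓝 0) := by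
    have h := hG0.sub hF0
    rwa [sub_zero] at h
  intro t ht
  exact sub_nonpos.mp (nonpos_of_mul_deriv_add_mul_nonpos (by linarith) hdiff hlim hlinear t ht)

/-- Comparison step in the proof of Lemma 1: if `F ≥ 0`, `F, G → 0` as
`t → 0⁺`, and `(n − C₁t)F + (n − 2 − 3C₁t)G ≤ tF′ − tG′` on `(0, T)`, then
`G ≤ F` on `(0, t₂)` where `t₂ = min(T, 1/(2C₁))`. -/
theorem lemma1_comparison_step (n : ℕ) (hn : 2 ≤ n) (C₁ T : ℝ)
    (hC₁ : 0 < C₁) (hT : 0 < T) (F G : ℝ → ℝ)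
    (hF : ∀ t ∈ Set.Ioo (0 : ℝ) T, DifferentiableAt ℝ F t)
    (hG : ∀ t ∈ Set.Ioo (0 : ℝ) T, DifferentiableAt ℝ G t)
    (hFpos : ∀ t ∈ Set.Ioo (0 : ℝ) T, 0 ≤ F t)
    (hF0 : Filter.Tendsto F (nhdsWithin 0 (Set.Ioi 0)) (nhds 0))
    (hG0 : Filter.Tendsto G (nhdsWithin 0 (Set.Ioi 0)) (nhds 0))
    (hineq : ∀ t ∈ Set.Ioo (0 : ℝ) T,
      ((n : ℝ) - C₁ * t) * F t + ((n : ℝ) - 2 - 3 * C₁ * t) * G t ≤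
        t * deriv F t - t * deriv G t) :
    ∀ t ∈ Set.Ioo (0 : ℝ) (min T (1 / (2 * C₁))), G t ≤ F t :=
  lemma1_comparison_step_general n hn C₁ T hC₁ F G hF hG hFpos hF0 hG0 hineq
end
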